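/- arXiv:2512.13993 — 9 statements merged into one kernel-verified Lean document; each statement's English description precedes it below -/
import Mathlib

section
/- Let g : [ℓ,u] → ℝ be a bounded L_g-Lipschitz function and f : [ℓ,u] → ℝ a bounded L_f-Lipschitz function. Let a, x ∈ ℝ^I sample them on the uniform grid with I ≥ 2 points: a[i] = g(t[i]) and x[i] = f(t[i]). Set L_{fg} = L_f·‖g‖_∞ + L_g·‖f‖_∞. If ⟨a, x⟩ = b, then the dyadic coarsenings satisfy: |⟨ā, x̄⟩ − b/2| ≤ (1/4)·L_{fg}·(u−ℓ)·I/(I−1) when I is even, and |⟨ā, x̄⟩ − ((I+1)/(2I))·b| ≤ (1/2)·L_{fg}·(u−ℓ) when I is odd. -/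
/-!
The products `y i = a i * x i` sample `g * f`, which is `(Lf * Mg + Lg * Mf)`-Lipschitz, so
consecutive products differ by at most `K = (Lf * Mg + Lg * Mf) * (u - l) / (I - 1)`. For `I = 2m`,
twice the coarse sum minus `b` is the sum of the `m` differences `y (2i) - y (2i+1)`. For `I = 2m + 1`,
`(2m + 1)` times the error is `m · (even sum) - (m + 1) · (odd sum)`, which regroups as
`∑_{i<m} ((m - i) (y (2i) - y (2i+1)) + (i + 1) (y (2i+2) - y (2i+1)))`: consecutive differences
with total weight `m (m + 1)`.
-/

open Finset

/-- Uniform grid with `I` points on `[l, u]` (0-indexed): `t[i] = l + i·(u−l)/(I−1)`. -/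
noncomputable def unifGrid (l u : ℝ) (I : ℕ) (i : ℕ) : ℝ := l + i * (u - l) / ((I : ℝ) - 1)

/-- Dyadic coarsening (0-indexed): `x̄[i] = x[2i]`. -/
def coarsen (x : ℕ → ℝ) (i : ℕ) : ℝ := x (2 * i)

theorem abs_mul_sub_mul_le_of_lipschitz {S : Set ℝ} {f g : ℝ → ℝ} {Lf Lg Mf Mg : ℝ}
    (hfLip : ∀ s ∈ S, ∀ t ∈ S, |f s - f t| ≤ Lf * |s - t|)
    (hgLip : ∀ s ∈ S, ∀ t ∈ S, |g s - g t| ≤ Lg * |s - t|)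
    (hMf : ∀ t ∈ S, |f t| ≤ Mf) (hMg : ∀ t ∈ S, |g t| ≤ Mg) {s t : ℝ} (hs : s ∈ S) (ht : t ∈ S) :
    |g s * f s - g t * f t| ≤ (Lf * Mg + Lg * Mf) * |s - t| :=
  calc |g s * f s - g t * f t| = |g s * (f s - f t) + f t * (g s - g t)| := by ring_nf
    _ ≤ |g s| * |f s - f t| + |f t| * |g s - g t| := by
        rw [← abs_mul, ← abs_mul]; exact abs_add_le _ _
    _ ≤ Mg * (Lf * |s - t|) + Mf * (Lg * |s - t|) :=
        add_le_add
          (mul_le_mul (hMg s hs) (hfLip s hs t ht) (abs_nonneg _) ((abs_nonneg _).trans (hMg s hs)))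
          (mul_le_mul (hMf t ht) (hgLip s hs t ht) (abs_nonneg _) ((abs_nonneg _).trans (hMf t ht)))
    _ = (Lf * Mg + Lg * Mf) * |s - t| := by ring

theorem unifGrid_add_one_sub (l u : ℝ) (I i : ℕ) :
    unifGrid l u I (i + 1) - unifGrid l u I i = (u - l) / ((I : ℝ) - 1) := by
  simp only [unifGrid]; push_cast; ring

theorem unifGrid_mem_Icc {l u : ℝ} (hlu : l ≤ u) {I i : ℕ} (hi : i < I) :
    unifGrid l u I i ∈ Set.Icc l u := by
  have hiI : (i : ℝ) ≤ (I : ℝ) - 1 := by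
    rw [le_sub_iff_add_le]; exact_mod_cast hi
  have hI : (0 : ℝ) ≤ (I : ℝ) - 1 := i.cast_nonneg.trans hiI
  have hratio : 0 ≤ (i : ℝ) / ((I : ℝ) - 1) ∧ (i : ℝ) / ((I : ℝ) - 1) ≤ 1 :=
    ⟨div_nonneg i.cast_nonneg hI, div_le_one_of_le₀ hiI hI⟩
  have hgrid : unifGrid l u I i = l + (i : ℝ) / ((I : ℝ) - 1) * (u - l) := by
    rw [unifGrid, div_mul_eq_mul_div]
  rw [hgrid]
  constructor <;> nlinarith

theorem abs_sampled_mul_succ_sub_le {l u : ℝ} (hlu : l ≤ u) {I : ℕ} {f g : ℝ → ℝ}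
    {Lf Lg Mf Mg : ℝ}
    (hfLip : ∀ s ∈ Set.Icc l u, ∀ t ∈ Set.Icc l u, |f s - f t| ≤ Lf * |s - t|)
    (hgLip : ∀ s ∈ Set.Icc l u, ∀ t ∈ Set.Icc l u, |g s - g t| ≤ Lg * |s - t|)
    (hMf : ∀ t ∈ Set.Icc l u, |f t| ≤ Mf) (hMg : ∀ t ∈ Set.Icc l u, |g t| ≤ Mg) {a x : ℕ → ℝ}
    (ha : ∀ i < I, a i = g (unifGrid l u I i)) (hx : ∀ i < I, x i = f (unifGrid l u I i))
    {i : ℕ} (hi : i + 1 < I) :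
    |a (i + 1) * x (i + 1) - a i * x i| ≤ (Lf * Mg + Lg * Mf) * ((u - l) / ((I : ℝ) - 1)) := by
  have hI : (0 : ℝ) ≤ (I : ℝ) - 1 := by
    rw [sub_nonneg]; exact_mod_cast (show 1 ≤ I by omega)
  rw [ha _ hi, hx _ hi, ha _ (by omega), hx _ (by omega),
    ← abs_of_nonneg (div_nonneg (sub_nonneg.2 hlu) hI), ← unifGrid_add_one_sub l u I i]
  exact abs_mul_sub_mul_le_of_lipschitz hfLip hgLip hMf hMg
    (unifGrid_mem_Icc hlu hi) (unifGrid_mem_Icc hlu (by omega))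

theorem sum_range_two_mul {M : Type*} [AddCommMonoid M] (y : ℕ → M) (m : ℕ) :
    ∑ i ∈ range (2 * m), y i = ∑ i ∈ range m, (y (2 * i) + y (2 * i + 1)) := by
  induction m with
  | zero => simp
  | succ m ih => rw [Nat.mul_succ, sum_range_succ, sum_range_succ, sum_range_succ, ih, add_assoc]

theorem abs_sum_even_sub_half_sum_le {y : ℕ → ℝ} {K : ℝ} {m : ℕ}
    (hy : ∀ i, i + 1 < 2 * m → |y (i + 1) - y i| ≤ K) :
    |∑ i ∈ range m, y (2 * i) - (∑ i ∈ range (2 * m), y i) / 2| ≤ m * K / 2 := by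
  have hpair : ∀ i ∈ range m, |y (2 * i) - y (2 * i + 1)| ≤ K := fun i hi => by
    rw [abs_sub_comm]; exact hy _ (by rw [mem_range] at hi; omega)
  have hsplit : ∑ i ∈ range m, y (2 * i) - (∑ i ∈ range (2 * m), y i) / 2
      = (∑ i ∈ range m, (y (2 * i) - y (2 * i + 1))) / 2 := by
    rw [sum_range_two_mul, sum_add_distrib, sum_sub_distrib]; ring
  rw [hsplit, abs_div, abs_two]
  gcongr
  calc _ ≤ ∑ i ∈ range m, |y (2 * i) - y (2 * i + 1)| := abs_sum_le_sum_abs _ _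
    _ ≤ ∑ i ∈ range m, K := sum_le_sum hpair
    _ = m * K := by simp

theorem mul_sum_even_sub_mul_sum_odd (y : ℕ → ℝ) (m : ℕ) :
    m * ∑ i ∈ range (m + 1), y (2 * i) - (m + 1) * ∑ i ∈ range m, y (2 * i + 1) =
      ∑ i ∈ range m,
        ((m - i) * (y (2 * i) - y (2 * i + 1)) + (i + 1) * (y (2 * i + 2) - y (2 * i + 1))) := by
  have hfirst : ∑ i ∈ range (m + 1), ((m : ℝ) - i) * y (2 * i) =
      ∑ i ∈ range m, ((m : ℝ) - i) * y (2 * i) := by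
    rw [sum_range_succ]; simp
  have hlast : ∑ i ∈ range (m + 1), (i : ℝ) * y (2 * i) =
      ∑ i ∈ range m, ((i : ℝ) + 1) * y (2 * i + 2) := by
    rw [sum_range_succ']; simp [Nat.mul_succ]
  have heven : (m : ℝ) * ∑ i ∈ range (m + 1), y (2 * i) =
      ∑ i ∈ range (m + 1), ((m : ℝ) - i) * y (2 * i) +
        ∑ i ∈ range (m + 1), (i : ℝ) * y (2 * i) := by
    rw [← sum_add_distrib, mul_sum]; exact sum_congr rfl fun i _ => by ring
  have hodd : ((m : ℝ) + 1) * ∑ i ∈ range m, y (2 * i + 1) =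
      ∑ i ∈ range m, ((m : ℝ) - i) * y (2 * i + 1) +
        ∑ i ∈ range m, ((i : ℝ) + 1) * y (2 * i + 1) := by
    rw [← sum_add_distrib, mul_sum]; exact sum_congr rfl fun i _ => by ring
  rw [heven, hodd, hfirst, hlast]
  simp only [mul_sub, sum_add_distrib, sum_sub_distrib]
  ring

theorem abs_sum_even_sub_weighted_sum_le {y : ℕ → ℝ} {K : ℝ} {m : ℕ}
    (hy : ∀ i, i + 1 < 2 * m + 1 → |y (i + 1) - y i| ≤ K) :
    |∑ i ∈ range (m + 1), y (2 * i) - (m + 1) / (2 * m + 1) * ∑ i ∈ range (2 * m + 1), y i| ≤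
      m * (m + 1) * K / (2 * m + 1) := by
  have hterm : ∀ i ∈ range m,
      |(m - i) * (y (2 * i) - y (2 * i + 1)) + (i + 1) * (y (2 * i + 2) - y (2 * i + 1))| ≤
        (m + 1) * K := fun i hi => by
    rw [mem_range] at hi
    have hmi : (0 : ℝ) ≤ m - i := sub_nonneg.2 (by exact_mod_cast hi.le)
    have h1 : |y (2 * i) - y (2 * i + 1)| ≤ K := by rw [abs_sub_comm]; exact hy _ (by omega)
    have h2 : |y (2 * i + 2) - y (2 * i + 1)| ≤ K := hy _ (by omega)
    calc _ ≤ (m - i) * |y (2 * i) - y (2 * i + 1)| +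
          (i + 1) * |y (2 * i + 2) - y (2 * i + 1)| := by
          refine (abs_add_le _ _).trans_eq ?_
          rw [abs_mul, abs_mul, abs_of_nonneg hmi, abs_of_nonneg (by positivity : (0 : ℝ) ≤ i + 1)]
      _ ≤ (m - i) * K + (i + 1) * K := by gcongr
      _ = (m + 1) * K := by ring
  have hpos : (0 : ℝ) < 2 * m + 1 := by positivity
  have hsplit :
      ∑ i ∈ range (m + 1), y (2 * i) - (m + 1) / (2 * m + 1) * ∑ i ∈ range (2 * m + 1), y i =
        (m * ∑ i ∈ range (m + 1), y (2 * i) - (m + 1) * ∑ i ∈ range m, y (2 * i + 1)) /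
          (2 * m + 1) := by
    rw [sum_range_succ _ (2 * m), sum_range_two_mul, sum_add_distrib, sum_range_succ _ m]
    field_simp
    ring
  rw [hsplit, mul_sum_even_sub_mul_sum_odd, abs_div, abs_of_pos hpos]
  gcongr
  calc _ ≤ _ := abs_sum_le_sum_abs _ _
    _ ≤ ∑ i ∈ range m, (m + 1) * K := sum_le_sum hterm
    _ = m * (m + 1) * K := by rw [sum_const, card_range, nsmul_eq_mul]; ring

/-- Single linear constraint scaling under dyadic coarsening. -/
theorem single_linear_constraint_scaling
    (l u : ℝ) (hlu : l < u) (I : ℕ) (hI : 2 ≤ I)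
    (f g : ℝ → ℝ) (Lf Lg Mf Mg b : ℝ)
    (hfLip : ∀ s ∈ Set.Icc l u, ∀ t ∈ Set.Icc l u, |f s - f t| ≤ Lf * |s - t|)
    (hgLip : ∀ s ∈ Set.Icc l u, ∀ t ∈ Set.Icc l u, |g s - g t| ≤ Lg * |s - t|)
    (hMf : ∀ t ∈ Set.Icc l u, |f t| ≤ Mf)
    (hMg : ∀ t ∈ Set.Icc l u, |g t| ≤ Mg)
    (a x : ℕ → ℝ)
    (ha : ∀ i < I, a i = g (unifGrid l u I i))
    (hx : ∀ i < I, x i = f (unifGrid l u I i))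
    (hb : ∑ i ∈ range I, a i * x i = b) :
    (Even I →
      |(∑ i ∈ range ((I + 1) / 2), coarsen a i * coarsen x i) - b / 2| ≤
        (1 / 4) * (Lf * Mg + Lg * Mf) * (u - l) * ((I : ℝ) / ((I : ℝ) - 1))) ∧
    (Odd I →
      |(∑ i ∈ range ((I + 1) / 2), coarsen a i * coarsen x i) - ((I : ℝ) + 1) / (2 * (I : ℝ)) * b| ≤
        (1 / 2) * (Lf * Mg + Lg * Mf) * (u - l)) := by
  have hstep : ∀ i, i + 1 < I →
      |a (i + 1) * x (i + 1) - a i * x i| ≤ (Lf * Mg + Lg * Mf) * ((u - l) / ((I : ℝ) - 1)) :=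
    fun _ hi => abs_sampled_mul_succ_sub_le hlu.le hfLip hgLip hMf hMg ha hx hi
  subst hb
  refine ⟨fun ⟨m, hm⟩ => ?_, fun ⟨m, hm⟩ => ?_⟩
  · obtain rfl : I = 2 * m := by omega
    rw [show (2 * m + 1) / 2 = m by omega]
    refine (abs_sum_even_sub_half_sum_le (y := fun i => a i * x i) hstep).trans_eq ?_
    push_cast
    field_simp
    ring
  · subst hm
    set K := (Lf * Mg + Lg * Mf) * ((u - l) / ((↑(2 * m + 1) : ℝ) - 1)) with hKdef
    have hK : 0 ≤ K := (abs_nonneg _).trans (hstep 0 (by omega))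
    have hm : (m : ℝ) ≠ 0 := by exact_mod_cast (show m ≠ 0 by omega)
    have hhalf : 1 / 2 * (Lf * Mg + Lg * Mf) * (u - l) = m * K := by
      rw [hKdef]; push_cast; field_simp; ring
    have hweight : ((↑(2 * m + 1) : ℝ) + 1) / (2 * ↑(2 * m + 1)) = (m + 1) / (2 * m + 1) := by
      push_cast; field_simp; ring
    rw [show (2 * m + 1 + 1) / 2 = m + 1 by omega, hhalf, hweight]
    refine (abs_sum_even_sub_weighted_sum_le (y := fun i => a i * x i) hstep).trans ?_
    rw [div_le_iff₀ (by positivity)]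
    nlinarith [mul_nonneg (sq_nonneg (m : ℝ)) hK]
end

section
/- Let g_1,…,g_K : [ℓ,u] → ℝ be bounded Lipschitz functions with Lipschitz constants L_{g_k}, and f : [ℓ,u] → ℝ a bounded L_f-Lipschitz function. Let A ∈ ℝ^{K×I} with A[k,i] = g_k(t[i]) on the uniform grid with I ≥ 2 points, and x ∈ ℝ^I with x[i] = f(t[i]). Let Ā be the submatrix of A consisting of its odd-indexed columns (so Ā has ⌊(I+1)/2⌋ columns) and x̄ the dyadic coarsening of x. Set L_{fg} = max_{k∈[K]} (L_f·‖g_k‖_∞ + L_{g_k}·‖f‖_∞). If Ax = b ∈ ℝ^K, then ‖Ā x̄ − b/2‖₂ ≤ √K·(1/4)·L_{fg}·(u−ℓ)·I/(I−1) when I is even, and ‖Ā x̄ − ((I+1)/(2I))·b‖₂ ≤ √K·(1/2)·L_{fg}·(u−ℓ) when I is odd. -/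
open Finset

private lemma sum_even_split (f : ℕ → ℝ) (m : ℕ) :
    ∑ i ∈ range (2 * m), f i = ∑ j ∈ range m, (f (2 * j) + f (2 * j + 1)) := by
  induction m with
  | zero => simp
  | succ n ih =>
    have h2 : 2 * (n + 1) = (2 * n + 1) + 1 := by ring
    rw [h2, sum_range_succ, sum_range_succ, ih, sum_range_succ]
    ring

private lemma sum_odd_split (f : ℕ → ℝ) (m : ℕ) :
    ∑ i ∈ range (2 * m + 1), f i
      = ∑ j ∈ range (m + 1), f (2 * j) + ∑ j ∈ range m, f (2 * j + 1) := by
  induction m with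
  | zero => simp
  | succ n ih =>
    have h2 : 2 * (n + 1) + 1 = (2 * n + 1) + 1 + 1 := by ring
    rw [h2, sum_range_succ, sum_range_succ, ih, sum_range_succ (n := n + 1),
      sum_range_succ (n := n)]
    rw [sum_range_succ (f := fun x => f (2 * x + 1)) n,
      show 2 * (n + 1) = 2 * n + 2 from by ring]
    ring

private lemma coeff_identity (e : ℕ → ℝ) (m : ℕ) :
    ∑ j ∈ range m, (((m : ℝ) - j) * e j + ((j : ℝ) + 1) * e (j + 1))
      = m * ∑ j ∈ range (m + 1), e j := by
  rw [sum_add_distrib]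
  have h1 : ∑ j ∈ range m, ((j : ℝ) + 1) * e (j + 1)
      = ∑ j ∈ range (m + 1), (j : ℝ) * e j := by
    rw [sum_range_succ' (fun j => (j : ℝ) * e j) m]
    push_cast
    simp
  have h2 : ∑ j ∈ range m, ((m : ℝ) - j) * e j
      = ∑ j ∈ range (m + 1), ((m : ℝ) - j) * e j := by
    rw [sum_range_succ]
    simp
  rw [h1, h2, ← sum_add_distrib, mul_sum]
  apply sum_congr rfl
  intro j _
  ring

private lemma sqrt_sum_sq_le {K : ℕ} (d : Fin K → ℝ) (B : ℝ) (hB : 0 ≤ B)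
    (h : ∀ k, |d k| ≤ B) :
    Real.sqrt (∑ k : Fin K, d k ^ 2) ≤ Real.sqrt K * B := by
  have h1 : ∑ k : Fin K, d k ^ 2 ≤ (K : ℝ) * B ^ 2 := by
    calc ∑ k : Fin K, d k ^ 2 ≤ ∑ _k : Fin K, B ^ 2 :=
          Finset.sum_le_sum (fun k _ => by
            nlinarith [h k, abs_nonneg (d k), sq_abs (d k)])
      _ = (K : ℝ) * B ^ 2 := by simp [Finset.card_univ, mul_comm]
  calc Real.sqrt (∑ k : Fin K, d k ^ 2) ≤ Real.sqrt ((K : ℝ) * B ^ 2) :=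
        Real.sqrt_le_sqrt h1
    _ = Real.sqrt K * B := by
        rw [Real.sqrt_mul (by positivity), Real.sqrt_sq hB]

/-- Matrix linear constraint scaling under dyadic coarsening. -/
theorem matrix_linear_constraint_scaling
    (l u : ℝ) (hlu : l < u) (I K : ℕ) (hI : 2 ≤ I) (hK : 1 ≤ K)
    (f : ℝ → ℝ) (g : Fin K → ℝ → ℝ)
    (Lf : ℝ) (Lg : Fin K → ℝ) (Mf : ℝ) (Mg : Fin K → ℝ) (Lfg : ℝ) (b : Fin K → ℝ)
    (hfLip : ∀ s ∈ Set.Icc l u, ∀ t ∈ Set.Icc l u, |f s - f t| ≤ Lf * |s - t|)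
    (hgLip : ∀ k : Fin K, ∀ s ∈ Set.Icc l u, ∀ t ∈ Set.Icc l u, |g k s - g k t| ≤ Lg k * |s - t|)
    (hMf : ∀ t ∈ Set.Icc l u, |f t| ≤ Mf)
    (hMg : ∀ k : Fin K, ∀ t ∈ Set.Icc l u, |g k t| ≤ Mg k)
    (hLfg : ∀ k : Fin K, Lf * Mg k + Lg k * Mf ≤ Lfg)
    (A : Fin K → ℕ → ℝ) (x : ℕ → ℝ)
    (hA : ∀ k : Fin K, ∀ i < I, A k i = g k (unifGrid l u I i))
    (hx : ∀ i < I, x i = f (unifGrid l u I i))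
    (hb : ∀ k : Fin K, ∑ i ∈ range I, A k i * x i = b k) :
    (Even I →
      Real.sqrt (∑ k : Fin K,
          ((∑ i ∈ range ((I + 1) / 2), coarsen (A k) i * coarsen x i) - b k / 2) ^ 2) ≤
        Real.sqrt K * ((1 / 4) * Lfg * (u - l) * ((I : ℝ) / ((I : ℝ) - 1)))) ∧
    (Odd I →
      Real.sqrt (∑ k : Fin K,
          ((∑ i ∈ range ((I + 1) / 2), coarsen (A k) i * coarsen x i) -
            ((I : ℝ) + 1) / (2 * (I : ℝ)) * b k) ^ 2) ≤
        Real.sqrt K * ((1 / 2) * Lfg * (u - l))) := by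
  have hIr : (2:ℝ) ≤ (I:ℝ) := by exact_mod_cast hI
  have hI0 : (0:ℝ) < (I:ℝ) - 1 := by linarith
  have hul : (0:ℝ) < u - l := by linarith
  set Δ : ℝ := (u - l) / ((I:ℝ) - 1) with hΔdef
  have hΔ0 : 0 < Δ := div_pos hul hI0
  have hmem : ∀ i, i < I → unifGrid l u I i ∈ Set.Icc l u := by
    intro i hi
    have hi' : (i:ℝ) ≤ (I:ℝ) - 1 := by
      have : ((i:ℝ) + 1) ≤ (I:ℝ) := by exact_mod_cast Nat.succ_le_of_lt hi
      linarith
    have h0 : (0:ℝ) ≤ (i:ℝ) := Nat.cast_nonneg i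
    unfold unifGrid
    constructor
    · have : 0 ≤ (i:ℝ) * (u - l) / ((I:ℝ) - 1) := by positivity
      linarith
    · have : (i:ℝ) * (u - l) / ((I:ℝ) - 1) ≤ u - l := by
        rw [div_le_iff₀ hI0]
        nlinarith
      linarith
  have lmem : l ∈ Set.Icc l u := ⟨le_refl l, hlu.le⟩
  have umem : u ∈ Set.Icc l u := ⟨hlu.le, le_refl u⟩
  have habslu : |l - u| = u - l := by
    rw [abs_sub_comm]; exact abs_of_pos hul
  have hLf0 : 0 ≤ Lf := by
    have h := hfLip l lmem u umem
    rw [habslu] at h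
    nlinarith [abs_nonneg (f l - f u)]
  have hLg0 : ∀ k : Fin K, 0 ≤ Lg k := by
    intro k
    have h := hgLip k l lmem u umem
    rw [habslu] at h
    nlinarith [abs_nonneg (g k l - g k u)]
  have hMf0 : 0 ≤ Mf := le_trans (abs_nonneg _) (hMf l lmem)
  have hMg0 : ∀ k : Fin K, 0 ≤ Mg k := fun k => le_trans (abs_nonneg _) (hMg k l lmem)
  have k0 : Fin K := ⟨0, hK⟩
  have hLfg0 : 0 ≤ Lfg :=
    le_trans (add_nonneg (mul_nonneg hLf0 (hMg0 k0)) (mul_nonneg (hLg0 k0) hMf0)) (hLfg k0)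
  set φ : Fin K → ℕ → ℝ := fun k i => g k (unifGrid l u I i) * f (unifGrid l u I i) with hφdef
  have hadj : ∀ k : Fin K, ∀ i, i + 1 < I → |φ k i - φ k (i+1)| ≤ Lfg * Δ := by
    intro k i hi1
    have hiI : i < I := by omega
    set s := unifGrid l u I i with hs
    set r := unifGrid l u I (i+1) with hr
    have hsm := hmem i hiI
    have hrm := hmem (i+1) hi1
    have hsr : |s - r| = Δ := by
      have hval : s - r = -Δ := by
        rw [hs, hr, hΔdef]
        unfold unifGrid
        push_cast
        field_simp
        ring
      rw [hval, abs_neg, abs_of_pos hΔ0]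
    have h1 : |f s - f r| ≤ Lf * Δ := by
      have := hfLip s hsm r hrm
      rwa [hsr] at this
    have h2 : |g k s - g k r| ≤ Lg k * Δ := by
      have := hgLip k s hsm r hrm
      rwa [hsr] at this
    have h3 := hMg k s hsm
    have h4 := hMf r hrm
    calc |φ k i - φ k (i+1)|
        = |g k s * (f s - f r) + f r * (g k s - g k r)| := by
          simp only [hφdef, ← hs, ← hr]
          ring_nf
      _ ≤ |g k s * (f s - f r)| + |f r * (g k s - g k r)| := abs_add_le _ _
      _ = |g k s| * |f s - f r| + |f r| * |g k s - g k r| := by rw [abs_mul, abs_mul]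
      _ ≤ Mg k * (Lf * Δ) + Mf * (Lg k * Δ) :=
          add_le_add (mul_le_mul h3 h1 (abs_nonneg _) (hMg0 k))
            (mul_le_mul h4 h2 (abs_nonneg _) hMf0)
      _ = (Lf * Mg k + Lg k * Mf) * Δ := by ring
      _ ≤ Lfg * Δ := mul_le_mul_of_nonneg_right (hLfg k) hΔ0.le
  have h_entry : ∀ k : Fin K, ∀ i, i < I → A k i * x i = φ k i := by
    intro k i hi
    rw [hA k i hi, hx i hi]
  have h_b : ∀ k : Fin K, b k = ∑ i ∈ range I, φ k i := by
    intro k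
    rw [← hb k]
    exact sum_congr rfl (fun i hi => h_entry k i (mem_range.mp hi))
  constructor
  · -- Even case
    intro hEven
    obtain ⟨m, hm⟩ := hEven
    have hm2 : I = 2 * m := by omega
    have hmpos : 1 ≤ m := by omega
    have hhalf : (I + 1) / 2 = m := by omega
    have hIm : (I:ℝ) = 2 * m := by rw [hm2]; push_cast; ring
    apply sqrt_sum_sq_le _ _ (by positivity)
    intro k
    have hS : ∑ i ∈ range ((I + 1) / 2), coarsen (A k) i * coarsen x i
        = ∑ j ∈ range m, φ k (2 * j) := by
      rw [hhalf]
      refine sum_congr rfl (fun j hj => ?_)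
      have hjm := mem_range.mp hj
      exact h_entry k (2 * j) (by omega)
    have hbk : b k = ∑ j ∈ range m, (φ k (2 * j) + φ k (2 * j + 1)) := by
      rw [h_b k, hm2]
      exact sum_even_split (φ k) m
    rw [hS, hbk]
    have hsplit : ∑ j ∈ range m, φ k (2 * j)
        - (∑ j ∈ range m, (φ k (2 * j) + φ k (2 * j + 1))) / 2
        = (1/2) * ∑ j ∈ range m, (φ k (2 * j) - φ k (2 * j + 1)) := by
      rw [sum_div, mul_sum, ← sum_sub_distrib]
      exact sum_congr rfl (fun j _ => by ring)
    rw [hsplit, abs_mul, abs_of_pos (by norm_num : (0:ℝ) < 1/2)]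
    calc (1/2) * |∑ j ∈ range m, (φ k (2 * j) - φ k (2 * j + 1))|
        ≤ (1/2) * ∑ j ∈ range m, |φ k (2 * j) - φ k (2 * j + 1)| := by
          gcongr
          exact Finset.abs_sum_le_sum_abs _ _
      _ ≤ (1/2) * ∑ _j ∈ range m, Lfg * Δ := by
          gcongr with j hj
          have hjm := mem_range.mp hj
          have := hadj k (2 * j) (by omega)
          simpa using this
      _ = (1/2) * (m * (Lfg * Δ)) := by rw [sum_const, card_range]; simp [nsmul_eq_mul]
      _ = 1 / 4 * Lfg * (u - l) * ((I:ℝ) / ((I:ℝ) - 1)) := by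
          have hm' : (m:ℝ) = (I:ℝ) / 2 := by rw [hIm]; ring
          rw [hΔdef, hm']
          ring
  · -- Odd case
    intro hOdd
    obtain ⟨m, hm⟩ := hOdd
    have hmpos : 1 ≤ m := by omega
    have hhalf : (I + 1) / 2 = m + 1 := by omega
    have hIm : (I:ℝ) = 2 * m + 1 := by rw [hm]; push_cast; ring
    have hIpos : (0:ℝ) < (I:ℝ) := by linarith
    apply sqrt_sum_sq_le _ _ (by positivity)
    intro k
    set e : ℕ → ℝ := fun j => φ k (2 * j) with hedef
    set o : ℕ → ℝ := fun j => φ k (2 * j + 1) with hodef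
    have hS : ∑ i ∈ range ((I + 1) / 2), coarsen (A k) i * coarsen x i
        = ∑ j ∈ range (m + 1), e j := by
      rw [hhalf]
      refine sum_congr rfl (fun j hj => ?_)
      have hjm := mem_range.mp hj
      exact h_entry k (2 * j) (by omega)
    have hbk : b k = ∑ j ∈ range (m + 1), e j + ∑ j ∈ range m, o j := by
      rw [h_b k, hm]
      exact sum_odd_split (φ k) m
    rw [hS, hbk]
    set S := ∑ j ∈ range (m + 1), e j with hSdef
    set O := ∑ j ∈ range m, o j with hOdef2
    have hd : (I:ℝ) * (S - ((I:ℝ) + 1) / (2 * (I:ℝ)) * (S + O))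
        = (m:ℝ) * S - ((m:ℝ) + 1) * O := by
      rw [hIm]
      have hne : (2 * (m:ℝ) + 1) ≠ 0 := by positivity
      field_simp
      ring
    have hiden : (m:ℝ) * S - ((m:ℝ) + 1) * O
        = ∑ j ∈ range m,
            (((m:ℝ) - j) * (e j - o j) + ((j:ℝ) + 1) * (e (j + 1) - o j)) := by
      have expand : ∑ j ∈ range m,
            (((m:ℝ) - j) * (e j - o j) + ((j:ℝ) + 1) * (e (j + 1) - o j))
          = ∑ j ∈ range m, (((m:ℝ) - j) * e j + ((j:ℝ) + 1) * e (j + 1))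
            - ∑ j ∈ range m, (((m:ℝ) + 1) * o j) := by
        rw [← sum_sub_distrib]
        exact sum_congr rfl (fun j _ => by ring)
      rw [expand, coeff_identity e m, ← mul_sum, ← hSdef, ← hOdef2]
    have hbound : |(m:ℝ) * S - ((m:ℝ) + 1) * O| ≤ (m:ℝ) * ((m:ℝ) + 1) * (Lfg * Δ) := by
      rw [hiden]
      calc |∑ j ∈ range m,
              (((m:ℝ) - j) * (e j - o j) + ((j:ℝ) + 1) * (e (j + 1) - o j))|
          ≤ ∑ j ∈ range m,
              |((m:ℝ) - j) * (e j - o j) + ((j:ℝ) + 1) * (e (j + 1) - o j)| :=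
            Finset.abs_sum_le_sum_abs _ _
        _ ≤ ∑ _j ∈ range m, ((m:ℝ) + 1) * (Lfg * Δ) := by
            apply sum_le_sum
            intro j hj
            have hjm := mem_range.mp hj
            have hjr : (j:ℝ) ≤ (m:ℝ) - 1 := by
              have : (j:ℝ) + 1 ≤ (m:ℝ) := by exact_mod_cast Nat.succ_le_of_lt hjm
              linarith
            have h1 : |e j - o j| ≤ Lfg * Δ := by
              have := hadj k (2 * j) (by omega)
              simpa [hedef, hodef] using this
            have h2 : |e (j + 1) - o j| ≤ Lfg * Δ := by
              have := hadj k (2 * j + 1) (by omega)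
              rw [abs_sub_comm] at this
              simpa [hedef, hodef, show 2 * (j + 1) = 2 * j + 1 + 1 from by ring] using this
            calc |((m:ℝ) - j) * (e j - o j) + ((j:ℝ) + 1) * (e (j + 1) - o j)|
                ≤ |((m:ℝ) - j) * (e j - o j)| + |((j:ℝ) + 1) * (e (j + 1) - o j)| :=
                  abs_add_le _ _
              _ = ((m:ℝ) - j) * |e j - o j| + ((j:ℝ) + 1) * |e (j + 1) - o j| := by
                  rw [abs_mul, abs_mul, abs_of_nonneg (by linarith : (0:ℝ) ≤ (m:ℝ) - j),
                    abs_of_nonneg (by positivity : (0:ℝ) ≤ (j:ℝ) + 1)]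
              _ ≤ ((m:ℝ) - j) * (Lfg * Δ) + ((j:ℝ) + 1) * (Lfg * Δ) :=
                  add_le_add (mul_le_mul_of_nonneg_left h1 (by linarith))
                    (mul_le_mul_of_nonneg_left h2 (by positivity))
              _ = ((m:ℝ) + 1) * (Lfg * Δ) := by ring
        _ = (m:ℝ) * ((m:ℝ) + 1) * (Lfg * Δ) := by
            rw [sum_const, card_range]
            simp [nsmul_eq_mul]
            ring
    have hmr : (1:ℝ) ≤ (m:ℝ) := by exact_mod_cast hmpos
    have habs2 : |S - ((I:ℝ) + 1) / (2 * (I:ℝ)) * (S + O)| * (I:ℝ)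
        = |(m:ℝ) * S - ((m:ℝ) + 1) * O| := by
      calc |S - ((I:ℝ) + 1) / (2 * (I:ℝ)) * (S + O)| * (I:ℝ)
          = |(I:ℝ)| * |S - ((I:ℝ) + 1) / (2 * (I:ℝ)) * (S + O)| := by
            rw [abs_of_pos hIpos]; ring
        _ = |(I:ℝ) * (S - ((I:ℝ) + 1) / (2 * (I:ℝ)) * (S + O))| := (abs_mul _ _).symm
        _ = |(m:ℝ) * S - ((m:ℝ) + 1) * O| := by rw [hd]
    have hstep : (m:ℝ) * ((m:ℝ) + 1) * (Lfg * Δ) ≤ 1 / 2 * Lfg * (u - l) * (I:ℝ) := by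
      rw [hΔdef,
        show (m:ℝ) * ((m:ℝ) + 1) * (Lfg * ((u - l) / ((I:ℝ) - 1)))
          = ((m:ℝ) * ((m:ℝ) + 1) * Lfg * (u - l)) / ((I:ℝ) - 1) from by ring,
        div_le_iff₀ hI0, hIm]
      have hfac : 0 ≤ Lfg * (u - l) * ((m:ℝ) * (m:ℝ)) :=
        mul_nonneg (mul_nonneg hLfg0 hul.le)
          (mul_nonneg (Nat.cast_nonneg m) (Nat.cast_nonneg m))
      nlinarith [hfac]
    have hgoal : |S - ((I:ℝ) + 1) / (2 * (I:ℝ)) * (S + O)| * (I:ℝ)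
        ≤ (1 / 2 * Lfg * (u - l)) * (I:ℝ) := by
      rw [habs2]
      exact le_trans hbound hstep
    exact le_of_mul_le_mul_right hgoal hIpos
end

section
/- Let f : [ℓ,u] → ℝ be a bounded L_f-Lipschitz function and x ∈ ℝ^I its samples x[i] = f(t[i]) on the uniform grid with I ≥ 2 points. If ‖x‖₁ = b, then the dyadic coarsening x̄ satisfies |‖x̄‖₁ − b/2| ≤ (1/4)·L_f·(u−ℓ)·I/(I−1) when I is even, and |‖x̄‖₁ − ((I+1)/(2I))·b| ≤ (1/2)·L_f·(u−ℓ) when I is odd. -/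
open Finset

lemma sum_even_odd (a : ℕ → ℝ) (m : ℕ) :
    ∑ k ∈ range (2 * m), a k
      = ∑ i ∈ range m, a (2 * i) + ∑ i ∈ range m, a (2 * i + 1) := by
  induction m with
  | zero => simp
  | succ n ih =>
    have h2 : 2 * (n + 1) = (2 * n + 1) + 1 := by ring
    rw [h2, sum_range_succ, sum_range_succ, sum_range_succ, sum_range_succ, ih]
    ring

lemma abel_odd (a : ℕ → ℝ) (m : ℕ) :
    (m : ℝ) * ∑ i ∈ range (m + 1), a (2 * i) - ((m : ℝ) + 1) * ∑ j ∈ range m, a (2 * j + 1)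
      = ∑ j ∈ range m, (((m : ℝ) - j) * (a (2 * j) - a (2 * j + 1))
          + ((j : ℝ) + 1) * (a (2 * j + 2) - a (2 * j + 1))) := by
  have h1 : ∑ i ∈ range (m + 1), (i : ℝ) * a (2 * i)
      = ∑ j ∈ range m, ((j : ℝ) + 1) * a (2 * j + 2) := by
    rw [Finset.sum_range_succ' (fun i => (i : ℝ) * a (2 * i)) m]
    simp [mul_add, Nat.mul_succ]
  have h2 : ∑ i ∈ range (m + 1), ((m : ℝ) - i) * a (2 * i)
      = ∑ j ∈ range m, ((m : ℝ) - j) * a (2 * j) := by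
    rw [Finset.sum_range_succ]
    simp
  have h3 : (m : ℝ) * ∑ i ∈ range (m + 1), a (2 * i)
      = ∑ i ∈ range (m + 1), (((m : ℝ) - i) * a (2 * i) + (i : ℝ) * a (2 * i)) := by
    rw [Finset.mul_sum]
    exact Finset.sum_congr rfl fun i _ => by ring
  rw [h3, Finset.sum_add_distrib, h1, h2, Finset.mul_sum, ← Finset.sum_add_distrib,
    ← Finset.sum_sub_distrib]
  exact Finset.sum_congr rfl fun j _ => by ring

/-- L1-norm constraint scaling under dyadic coarsening. -/
theorem l1_norm_constraint_scaling
    (l u : ℝ) (hlu : l < u) (I : ℕ) (hI : 2 ≤ I)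
    (f : ℝ → ℝ) (Lf Mf b : ℝ)
    (hfLip : ∀ s ∈ Set.Icc l u, ∀ t ∈ Set.Icc l u, |f s - f t| ≤ Lf * |s - t|)
    (hMf : ∀ t ∈ Set.Icc l u, |f t| ≤ Mf)
    (x : ℕ → ℝ)
    (hx : ∀ i < I, x i = f (unifGrid l u I i))
    (hb : ∑ i ∈ range I, |x i| = b) :
    (Even I →
      |(∑ i ∈ range ((I + 1) / 2), |coarsen x i|) - b / 2| ≤
        (1 / 4) * Lf * (u - l) * ((I : ℝ) / ((I : ℝ) - 1))) ∧
    (Odd I →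
      |(∑ i ∈ range ((I + 1) / 2), |coarsen x i|) - ((I : ℝ) + 1) / (2 * (I : ℝ)) * b| ≤
        (1 / 2) * Lf * (u - l)) := by
  have hI1 : (1 : ℝ) ≤ (I : ℝ) - 1 := by
    have : (2 : ℝ) ≤ (I : ℝ) := by exact_mod_cast hI
    linarith
  have hIne : (I : ℝ) - 1 ≠ 0 := by linarith
  set h : ℝ := (u - l) / ((I : ℝ) - 1) with hh
  have hhpos : 0 < h := div_pos (by linarith) (by linarith)
  have hLf : 0 ≤ Lf := by
    have hl : l ∈ Set.Icc l u := ⟨le_refl l, le_of_lt hlu⟩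
    have hu : u ∈ Set.Icc l u := ⟨le_of_lt hlu, le_refl u⟩
    have := hfLip u hu l hl
    nlinarith [abs_nonneg (f u - f l), abs_of_pos (show (0:ℝ) < u - l by linarith)]
  have hmem : ∀ k, k < I → unifGrid l u I k ∈ Set.Icc l u := by
    intro k hk
    have hk' : (k : ℝ) ≤ (I : ℝ) - 1 := by
      have : (k : ℝ) + 1 ≤ (I : ℝ) := by exact_mod_cast hk
      linarith
    constructor
    · have : 0 ≤ (k : ℝ) * (u - l) / ((I : ℝ) - 1) := by
        apply div_nonneg
        · exact mul_nonneg (Nat.cast_nonneg k) (by linarith)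
        · linarith
      simp only [unifGrid]; linarith
    · have : (k : ℝ) * (u - l) / ((I : ℝ) - 1) ≤ u - l := by
        rw [div_le_iff₀ (by linarith)]
        nlinarith [Nat.cast_nonneg (α := ℝ) k]
      simp only [unifGrid]; linarith
  have hstep : ∀ k, k + 1 < I → abs (|x (k + 1)| - |x k|) ≤ Lf * h := by
    intro k hk1
    have hk : k < I := by omega
    have hd : |x (k + 1) - x k| ≤ Lf * h := by
      rw [hx (k + 1) hk1, hx k hk]
      have := hfLip (unifGrid l u I (k + 1)) (hmem (k + 1) hk1) (unifGrid l u I k) (hmem k hk)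
      have hdiff : unifGrid l u I (k + 1) - unifGrid l u I k = h := by
        simp only [unifGrid, hh]
        push_cast
        field_simp
        ring
      rw [hdiff] at this
      rwa [abs_of_pos hhpos] at this
    exact le_trans (abs_abs_sub_abs_le_abs_sub _ _) hd
  constructor
  · -- Even case
    rintro ⟨m, hm⟩
    have hmI : I = 2 * m := by omega
    have hm1 : 1 ≤ m := by omega
    subst hmI
    have hhalf : (2 * m + 1) / 2 = m := by omega
    rw [hhalf]
    set E : ℝ := ∑ i ∈ range m, |x (2 * i)| with hE
    set O : ℝ := ∑ i ∈ range m, |x (2 * i + 1)| with hO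
    have hbE : b = E + O := by rw [← hb, sum_even_odd (fun k => |x k|) m]
    have hcoars : (∑ i ∈ range m, |coarsen x i|) = E := by
      simp [coarsen, hE]
    have hEO : |E - O| ≤ (m : ℝ) * (Lf * h) := by
      rw [hE, hO, ← Finset.sum_sub_distrib]
      calc |∑ i ∈ range m, (|x (2 * i)| - |x (2 * i + 1)|)|
          ≤ ∑ i ∈ range m, abs (|x (2 * i)| - |x (2 * i + 1)|) := Finset.abs_sum_le_sum_abs _ _
        _ ≤ ∑ _i ∈ range m, Lf * h := by
            apply Finset.sum_le_sum
            intro i hi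
            have : 2 * i + 1 < 2 * m := by
              have := Finset.mem_range.mp hi; omega
            have := hstep (2 * i) this
            rwa [abs_sub_comm] at this
        _ = (m : ℝ) * (Lf * h) := by simp [mul_comm]
    rw [hcoars, hbE]
    have key : |E - (E + O) / 2| = |E - O| / 2 := by
      rw [show E - (E + O) / 2 = (E - O) / 2 by ring, abs_div]
      simp
    rw [key]
    have hm1' : (1 : ℝ) ≤ (m : ℝ) := by exact_mod_cast hm1
    have hne : (2 * (m : ℝ) - 1) ≠ 0 := by linarith
    have hgoal : (m : ℝ) * (Lf * h) / 2
        = 1 / 4 * Lf * (u - l) * ((2 * m : ℕ) / (((2 * m : ℕ) : ℝ) - 1)) := by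
      rw [hh]
      push_cast
      field_simp
      ring
    rw [← hgoal]
    linarith [hEO]
  · -- Odd case
    rintro ⟨m, hm⟩
    have hmI : I = 2 * m + 1 := by omega
    have hm1 : 1 ≤ m := by omega
    subst hmI
    have hhalf : (2 * m + 1 + 1) / 2 = m + 1 := by omega
    rw [hhalf]
    set E : ℝ := ∑ i ∈ range (m + 1), |x (2 * i)| with hE
    set O : ℝ := ∑ i ∈ range m, |x (2 * i + 1)| with hO
    have hbE : b = E + O := by
      rw [← hb, sum_range_succ, sum_even_odd (fun k => |x k|) m, hE, hO, sum_range_succ]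
      ring
    have hcoars : (∑ i ∈ range (m + 1), |coarsen x i|) = E := by
      simp [coarsen, hE]
    have habel : |(m : ℝ) * E - ((m : ℝ) + 1) * O| ≤ (m : ℝ) * (((m : ℝ) + 1) * (Lf * h)) := by
      rw [hE, hO, abel_odd (fun k => |x k|) m]
      calc |∑ j ∈ range m, (((m : ℝ) - j) * (|x (2 * j)| - |x (2 * j + 1)|)
              + ((j : ℝ) + 1) * (|x (2 * j + 2)| - |x (2 * j + 1)|))|
          ≤ ∑ j ∈ range m, |((m : ℝ) - j) * (|x (2 * j)| - |x (2 * j + 1)|)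
              + ((j : ℝ) + 1) * (|x (2 * j + 2)| - |x (2 * j + 1)|)| :=
            Finset.abs_sum_le_sum_abs _ _
        _ ≤ ∑ _j ∈ range m, ((m : ℝ) + 1) * (Lf * h) := by
            apply Finset.sum_le_sum
            intro j hj
            have hjm : j < m := Finset.mem_range.mp hj
            have hjm' : ((j : ℝ)) ≤ (m : ℝ) := by exact_mod_cast hjm.le
            have h1 : abs (|x (2 * j + 1)| - |x (2 * j)|) ≤ Lf * h := hstep (2 * j) (by omega)
            have h1' : abs (|x (2 * j)| - |x (2 * j + 1)|) ≤ Lf * h := by rwa [abs_sub_comm] at h1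
            have h2 : abs (|x (2 * j + 2)| - |x (2 * j + 1)|) ≤ Lf * h := hstep (2 * j + 1) (by omega)
            calc |((m : ℝ) - j) * (|x (2 * j)| - |x (2 * j + 1)|)
                  + ((j : ℝ) + 1) * (|x (2 * j + 2)| - |x (2 * j + 1)|)|
                ≤ |((m : ℝ) - j) * (|x (2 * j)| - |x (2 * j + 1)|)|
                  + |((j : ℝ) + 1) * (|x (2 * j + 2)| - |x (2 * j + 1)|)| := abs_add_le _ _
              _ = ((m : ℝ) - j) * abs (|x (2 * j)| - |x (2 * j + 1)|)
                  + ((j : ℝ) + 1) * abs (|x (2 * j + 2)| - |x (2 * j + 1)|) := by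
                  rw [abs_mul, abs_mul, abs_of_nonneg (by linarith : (0:ℝ) ≤ (m : ℝ) - j),
                    abs_of_nonneg (by positivity : (0:ℝ) ≤ (j : ℝ) + 1)]
              _ ≤ ((m : ℝ) - j) * (Lf * h) + ((j : ℝ) + 1) * (Lf * h) := by
                  have hLh : 0 ≤ Lf * h := mul_nonneg hLf hhpos.le
                  apply add_le_add
                  · exact mul_le_mul_of_nonneg_left h1' (by linarith)
                  · exact mul_le_mul_of_nonneg_left h2 (by positivity)
              _ = ((m : ℝ) + 1) * (Lf * h) := by ring
        _ = (m : ℝ) * (((m : ℝ) + 1) * (Lf * h)) := by simp [mul_comm]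
    rw [hcoars, hbE]
    have hIpos : (0 : ℝ) < 2 * (m : ℝ) + 1 := by positivity
    have hrw : E - (((2 * m + 1 : ℕ) : ℝ) + 1) / (2 * ((2 * m + 1 : ℕ) : ℝ)) * (E + O)
        = ((m : ℝ) * E - ((m : ℝ) + 1) * O) / (2 * (m : ℝ) + 1) := by
      push_cast
      field_simp
      ring
    rw [hrw, abs_div, abs_of_pos hIpos, div_le_iff₀ hIpos]
    have hbound : (m : ℝ) * (((m : ℝ) + 1) * (Lf * h))
        ≤ 1 / 2 * Lf * (u - l) * (2 * (m : ℝ) + 1) := by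
      have hm1' : (1 : ℝ) ≤ (m : ℝ) := by exact_mod_cast hm1
      have h2m : (0 : ℝ) < 2 * (m : ℝ) := by linarith
      have e : h = (u - l) / (2 * (m : ℝ)) := by
        rw [hh]; congr 1; push_cast; ring
      rw [e]
      have e2 : (m : ℝ) * (((m : ℝ) + 1) * (Lf * ((u - l) / (2 * (m : ℝ)))))
          = ((m : ℝ) + 1) / 2 * (Lf * (u - l)) := by
        field_simp
      rw [e2]
      nlinarith [mul_nonneg hLf (by linarith : (0:ℝ) ≤ u - l)]
    calc |(m : ℝ) * E - ((m : ℝ) + 1) * O| ≤ (m : ℝ) * (((m : ℝ) + 1) * (Lf * h)) := habel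
      _ ≤ 1 / 2 * Lf * (u - l) * (2 * (m : ℝ) + 1) := hbound
end

section
/- Given λ₁, λ₂ ≥ 0 with λ₁ + λ₂ = 1, an interval [ℓ,u] with ℓ < u, and a constant L_f > 0, there exists an L_f-Lipschitz function f on [ℓ,u] such that |f(λ₁ℓ + λ₂u) − (λ₁ f(ℓ) + λ₂ f(u))| = 2·L_f·λ₁·λ₂·|ℓ − u|; in particular, the function f(t) = L_f·|t − (λ₁ℓ + λ₂u)| achieves this equality. -/
/-- Tightness of the Lipschitz interpolation bound: the function
`f(t) = L·|t − (λ₁ℓ + λ₂u)|` is `L`-Lipschitz on `[ℓ,u]` and attains the bound with equality. -/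
theorem lipschitz_interpolation_tightness
    (l u Lf l1 l2 : ℝ) (hlu : l < u) (hL : 0 < Lf)
    (h1 : 0 ≤ l1) (h2 : 0 ≤ l2) (hsum : l1 + l2 = 1) :
    ∃ f : ℝ → ℝ,
      (∀ x ∈ Set.Icc l u, ∀ y ∈ Set.Icc l u, |f x - f y| ≤ Lf * |x - y|) ∧
      |f (l1 * l + l2 * u) - (l1 * f l + l2 * f u)| = 2 * Lf * l1 * l2 * |l - u| ∧
      f = fun t => Lf * |t - (l1 * l + l2 * u)| := by
  set c := l1 * l + l2 * u with hc
  refine ⟨fun t => Lf * |t - c|, ?_, ?_, rfl⟩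
  · intro x _ y _
    have h := abs_abs_sub_abs_le_abs_sub (x - c) (y - c)
    have h2' : x - c - (y - c) = x - y := by ring
    rw [h2'] at h
    rw [← mul_sub, abs_mul, abs_of_pos hL]
    exact mul_le_mul_of_nonneg_left h hL.le
  · simp only []
    have hul : (0:ℝ) ≤ u - l := by linarith
    have hcc : c - c = 0 := sub_self c
    have hlc : |l - c| = l2 * (u - l) := by
      have h' : l - c = -(l2 * (u - l)) := by rw [hc]; linear_combination (-l) * hsum
      rw [h', abs_neg, abs_of_nonneg (mul_nonneg h2 hul)]
    have huc : |u - c| = l1 * (u - l) := by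
      have h' : u - c = l1 * (u - l) := by rw [hc]; linear_combination (-u) * hsum
      rw [h', abs_of_nonneg (mul_nonneg h1 hul)]
    have hnn : 0 ≤ l1 * (Lf * (l2 * (u - l))) + l2 * (Lf * (l1 * (u - l))) :=
      add_nonneg (mul_nonneg h1 (mul_nonneg hL.le (mul_nonneg h2 hul)))
        (mul_nonneg h2 (mul_nonneg hL.le (mul_nonneg h1 hul)))
    rw [hcc, abs_zero, mul_zero, hlc, huc, abs_of_nonpos (by linarith : l - u ≤ 0),
      zero_sub, abs_neg, abs_of_nonneg hnn]
    ring
end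

section
/- Let S ≥ 1, let L ≥ 0, ℓ < u, and let e⁰ ≥ 0. Suppose nonnegative reals e_1,…,e_S and rates d_1,…,d_S ∈ [0,1) satisfy the lazy multiscale error recurrence: e_S ≤ d_S·e⁰ and, for s = 1,…,S−1, e_s ≤ (1 + d_s)·e_{s+1} + d_s·(L·(u−ℓ)/2)/√(2^{S−s}). Then e_1 ≤ e⁰·d_S·∏_{s=1}^{S−1}(1 + d_s) + (L·(u−ℓ)/2)·Σ_{s=1}^{S−1} (1/√(2^{S−s}))·d_s·∏_{j=1}^{s−1}(1 + d_j). In particular, with d_s = q^{K_s} for an algorithm with iterate convergence rate q ∈ [0,1) run for K_s iterations at scale s, this gives the lazy multiscale error bound ‖x_1^{K_1} − x*_1‖ ≤ ‖x_S^0 − x*_S‖·q^{K_S}·∏_{s=1}^{S−1}(1 + q^{K_s}) + (L·(u−ℓ)/2)·Σ_{s=1}^{S−1} (1/√(2^{S−s}))·q^{K_s}·∏_{j=1}^{s−1}(1 + q^{K_j}). -/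
open Finset

/-- Lazy multiscale error recurrence bound (general per-scale rates `d s`). -/
theorem lazy_multiscale_error_bound
    (S : ℕ) (hS : 1 ≤ S) (L l u e0 : ℝ) (hL : 0 ≤ L) (hlu : l < u) (he0 : 0 ≤ e0)
    (e d : ℕ → ℝ)
    (he : ∀ s, 1 ≤ s → s ≤ S → 0 ≤ e s)
    (hd0 : ∀ s, 1 ≤ s → s ≤ S → 0 ≤ d s)
    (hd1 : ∀ s, 1 ≤ s → s ≤ S → d s < 1)
    (heS : e S ≤ d S * e0)
    (hrec : ∀ s, 1 ≤ s → s < S →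
      e s ≤ (1 + d s) * e (s + 1) + d s * (L * (u - l) / 2) / Real.sqrt ((2 : ℝ) ^ (S - s))) :
    e 1 ≤ e0 * d S * (∏ s ∈ Finset.Icc 1 (S - 1), (1 + d s)) +
      (L * (u - l) / 2) *
        ∑ s ∈ Finset.Icc 1 (S - 1),
          (1 / Real.sqrt ((2 : ℝ) ^ (S - s))) * d s * ∏ j ∈ Finset.Icc 1 (s - 1), (1 + d j) := by
  set C := L * (u - l) / 2 with hC
  have hC0 : 0 ≤ C := by
    have : 0 ≤ u - l := by linarith
    positivity
  set w : ℕ → ℝ := fun j => 1 / Real.sqrt ((2 : ℝ) ^ (S - j)) with hw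
  have key : ∀ k s, 1 ≤ s → s + k = S →
      e s ≤ e0 * d S * (∏ j ∈ Finset.Ico s S, (1 + d j)) +
        C * ∑ j ∈ Finset.Ico s S, w j * d j * ∏ m ∈ Finset.Ico s j, (1 + d m) := by
    intro k
    induction k with
    | zero =>
      intro s hs hsk
      have hsS : s = S := by omega
      subst hsS
      simp only [Finset.Ico_self, Finset.prod_empty, Finset.sum_empty, mul_one, mul_zero]
      linarith
    | succ k ih =>
      intro s hs hsk
      have hsS : s < S := by omega
      have h1 := hrec s hs hsS
      have h2 := ih (s + 1) (by omega) (by omega)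
      have hds : 0 ≤ d s := hd0 s hs (le_of_lt hsS)
      have hprod : (∏ j ∈ Finset.Ico s S, (1 + d j))
          = (1 + d s) * ∏ j ∈ Finset.Ico (s + 1) S, (1 + d j) :=
        Finset.prod_eq_prod_Ico_succ_bot hsS _
      have hsum : (∑ j ∈ Finset.Ico s S, w j * d j * ∏ m ∈ Finset.Ico s j, (1 + d m))
          = w s * d s +
            (1 + d s) * ∑ j ∈ Finset.Ico (s + 1) S, w j * d j * ∏ m ∈ Finset.Ico (s + 1) j, (1 + d m) := by
        rw [Finset.sum_eq_sum_Ico_succ_bot hsS]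
        rw [Finset.Ico_self, Finset.prod_empty, mul_one, Finset.mul_sum]
        congr 1
        refine Finset.sum_congr rfl (fun j hj => ?_)
        have hsj : s < j := (Finset.mem_Ico.mp hj).1
        rw [Finset.prod_eq_prod_Ico_succ_bot hsj]
        ring
      have hmul : (1 + d s) * e (s + 1) ≤ (1 + d s) *
          (e0 * d S * (∏ j ∈ Finset.Ico (s + 1) S, (1 + d j)) +
            C * ∑ j ∈ Finset.Ico (s + 1) S, w j * d j * ∏ m ∈ Finset.Ico (s + 1) j, (1 + d m)) :=
        mul_le_mul_of_nonneg_left h2 (by linarith)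
      have hrw : d s * C / Real.sqrt ((2 : ℝ) ^ (S - s)) = C * (w s * d s) := by
        simp only [hw]
        ring
      rw [hprod, hsum]
      calc e s ≤ (1 + d s) * e (s + 1) + d s * C / Real.sqrt ((2 : ℝ) ^ (S - s)) := h1
        _ ≤ (1 + d s) *
            (e0 * d S * (∏ j ∈ Finset.Ico (s + 1) S, (1 + d j)) +
              C * ∑ j ∈ Finset.Ico (s + 1) S, w j * d j * ∏ m ∈ Finset.Ico (s + 1) j, (1 + d m)) +
            d s * C / Real.sqrt ((2 : ℝ) ^ (S - s)) := by linarith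
        _ = e0 * d S * ((1 + d s) * ∏ j ∈ Finset.Ico (s + 1) S, (1 + d j)) +
            C * (w s * d s +
              (1 + d s) * ∑ j ∈ Finset.Ico (s + 1) S, w j * d j * ∏ m ∈ Finset.Ico (s + 1) j, (1 + d m)) := by
          rw [hrw]; ring
  have h := key (S - 1) 1 le_rfl (by omega)
  have hIcc : Finset.Icc 1 (S - 1) = Finset.Ico 1 S := by
    rw [← Finset.Ico_add_one_right_eq_Icc]
    congr 1
    omega
  rw [hIcc]
  refine h.trans_eq ?_
  have hsum2 : (∑ j ∈ Finset.Ico 1 S, w j * d j * ∏ m ∈ Finset.Ico 1 j, (1 + d m))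
      = ∑ j ∈ Finset.Ico 1 S,
          (1 / Real.sqrt ((2 : ℝ) ^ (S - j))) * d j * ∏ m ∈ Finset.Icc 1 (j - 1), (1 + d m) := by
    refine Finset.sum_congr rfl (fun j hj => ?_)
    have hj1 : 1 ≤ j := (Finset.mem_Ico.mp hj).1
    have hIj : Finset.Icc 1 (j - 1) = Finset.Ico 1 j := by
      rw [← Finset.Ico_add_one_right_eq_Icc]
      congr 1
      omega
    rw [hIj, hw]
  rw [hsum2]
end

section
/- Let S ≥ 1, L ≥ 0, ℓ < u, e⁰ ≥ 0, and d ∈ (0,1). Suppose nonnegative reals e_1,…,e_S satisfy e_S ≤ d·e⁰ and, for s = 1,…,S−1, e_s ≤ (1 + d)·e_{s+1} + d·(L·(u−ℓ)/2)/√(2^{S−s}). Then e_1 ≤ e⁰·d·(d+1)^{S−1} + (L·(u−ℓ)/2)·[d·(√(2^S)·(d+1)^S − √2·(d+1))]/[√(2^S)·(d+1)·(√2·d + √2 − 1)]. -/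
open Finset

/-- Lazy multiscale error bound with a constant rate `d = q^K` at every scale. -/
theorem lazy_multiscale_error_bound_constant
    (S : ℕ) (hS : 1 ≤ S) (L l u e0 d : ℝ) (hL : 0 ≤ L) (hlu : l < u) (he0 : 0 ≤ e0)
    (hd0 : 0 < d) (hd1 : d < 1)
    (e : ℕ → ℝ)
    (he : ∀ s, 1 ≤ s → s ≤ S → 0 ≤ e s)
    (heS : e S ≤ d * e0)
    (hrec : ∀ s, 1 ≤ s → s < S →
      e s ≤ (1 + d) * e (s + 1) + d * (L * (u - l) / 2) / Real.sqrt ((2 : ℝ) ^ (S - s))) :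
    e 1 ≤ e0 * d * (d + 1) ^ (S - 1) +
      (L * (u - l) / 2) *
        (d * (Real.sqrt ((2 : ℝ) ^ S) * (d + 1) ^ S - Real.sqrt 2 * (d + 1))) /
          (Real.sqrt ((2 : ℝ) ^ S) * (d + 1) * (Real.sqrt 2 * d + Real.sqrt 2 - 1)) := by
  set C := L * (u - l) / 2 with hC
  have hC0 : 0 ≤ C := by
    have h : 0 ≤ u - l := by linarith
    rw [hC]; positivity
  have hsq2 : (0:ℝ) < Real.sqrt 2 := Real.sqrt_pos.mpr (by norm_num)
  have hsq2sq : Real.sqrt 2 ^ 2 = 2 := Real.sq_sqrt (by norm_num)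
  have hsq2gt1 : (1:ℝ) < Real.sqrt 2 := by nlinarith
  have hpow : ∀ k : ℕ, Real.sqrt ((2:ℝ) ^ k) = Real.sqrt 2 ^ k := by
    intro k
    induction k with
    | zero => simp
    | succ k ih => rw [pow_succ, Real.sqrt_mul (by positivity), ih, pow_succ]
  have key : ∀ n, n < S → e (S - n) ≤ d * e0 * (d + 1) ^ n +
      C * d * ∑ i ∈ Finset.range n, (d + 1) ^ i / Real.sqrt ((2:ℝ) ^ (n - i)) := by
    intro n
    induction n with
    | zero => intro _; simpa using heS
    | succ n ih =>
      intro hn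
      have hn' : n < S := Nat.lt_of_succ_lt hn
      have hs1 : 1 ≤ S - (n + 1) := by omega
      have hsS : S - (n + 1) < S := by omega
      have h1 := hrec _ hs1 hsS
      have hsub : S - (S - (n + 1)) = n + 1 := by omega
      have hstep : S - (n + 1) + 1 = S - n := by omega
      rw [hsub, hstep] at h1
      have h2 := ih hn'
      have hd1' : (0:ℝ) ≤ 1 + d := by linarith
      calc e (S - (n + 1)) ≤ (1 + d) * e (S - n) + d * C / Real.sqrt ((2:ℝ) ^ (n + 1)) := h1
        _ ≤ (1 + d) * (d * e0 * (d + 1) ^ n +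
              C * d * ∑ i ∈ Finset.range n, (d + 1) ^ i / Real.sqrt ((2:ℝ) ^ (n - i))) +
              d * C / Real.sqrt ((2:ℝ) ^ (n + 1)) := by gcongr
        _ = d * e0 * (d + 1) ^ (n + 1) +
              C * d * ∑ i ∈ Finset.range (n + 1), (d + 1) ^ i / Real.sqrt ((2:ℝ) ^ (n + 1 - i)) := by
            have hss : ∑ i ∈ Finset.range (n + 1), (d + 1) ^ i / Real.sqrt ((2:ℝ) ^ (n + 1 - i)) =
                (d + 1) * ∑ i ∈ Finset.range n, (d + 1) ^ i / Real.sqrt ((2:ℝ) ^ (n - i)) +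
                  1 / Real.sqrt ((2:ℝ) ^ (n + 1)) := by
              rw [Finset.sum_range_succ', Finset.mul_sum]
              simp only [Nat.succ_sub_succ, Nat.sub_zero, pow_zero]
              congr 1
              apply Finset.sum_congr rfl
              intro i _
              ring
            rw [hss]
            ring
  have hkey := key (S - 1) (by omega)
  have hs1 : S - (S - 1) = 1 := by omega
  rw [hs1] at hkey
  -- rewrite the sum as a geometric series
  set a := Real.sqrt 2 * (d + 1) with ha
  have ha1 : 1 < a := by nlinarith
  have hane : a ≠ 1 := ne_of_gt ha1
  have hsum : ∑ i ∈ Finset.range (S - 1), (d + 1) ^ i / Real.sqrt ((2:ℝ) ^ (S - 1 - i)) =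
      (a ^ (S - 1) - 1) / (a - 1) / Real.sqrt 2 ^ (S - 1) := by
    have h1 : ∀ i ∈ Finset.range (S - 1),
        (d + 1) ^ i / Real.sqrt ((2:ℝ) ^ (S - 1 - i)) = a ^ i / Real.sqrt 2 ^ (S - 1) := by
      intro i hi
      have hi' : i ≤ S - 1 := le_of_lt (Finset.mem_range.mp hi)
      rw [hpow, ha, mul_pow]
      have : Real.sqrt 2 ^ (S - 1) = Real.sqrt 2 ^ (S - 1 - i) * Real.sqrt 2 ^ i := by
        rw [← pow_add]; congr 1; omega
      rw [this]
      field_simp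
    rw [Finset.sum_congr rfl h1, ← Finset.sum_div, geom_sum_eq hane]
  rw [hsum] at hkey
  refine hkey.trans (le_of_eq ?_)
  have hSS : S = (S - 1) + 1 := by omega
  have hps : Real.sqrt ((2:ℝ) ^ S) = Real.sqrt 2 ^ S := hpow S
  have hpS : Real.sqrt 2 ^ S = Real.sqrt 2 * Real.sqrt 2 ^ (S - 1) := by
    conv_lhs => rw [hSS]; rw [pow_succ]
    ring
  have hdS : (d + 1) ^ S = (d + 1) * (d + 1) ^ (S - 1) := by
    conv_lhs => rw [hSS]; rw [pow_succ]
    ring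
  have haS : a ^ (S - 1) = Real.sqrt 2 ^ (S - 1) * (d + 1) ^ (S - 1) := by
    rw [ha, mul_pow]
  have ham : (0:ℝ) < a - 1 := by linarith
  rw [hps, hpS, hdS, haS]
  have h2ne : Real.sqrt 2 ^ (S - 1) ≠ 0 := by positivity
  have hd1ne : d + 1 ≠ 0 := by positivity
  have hrw : Real.sqrt 2 * d + Real.sqrt 2 - 1 = a - 1 := by rw [ha]; ring
  rw [hrw]
  field_simp
  ring
end

section
/- Let f be an L_f-Lipschitz function on [ℓ,u], and let f̂ be the piecewise linear approximation of f on the uniform grid with I ≥ 2 points and spacing Δt = (u−ℓ)/(I−1), i.e., the piecewise linear approximation built from the samples x[i] = f(t[i]). Then ∫_ℓ^u (f̂(t) − f(t))² dt ≤ (2/15)·(u − ℓ)·Δt²·L_f². -/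
/-!
On a cell `[a, b]` the interpolation error is the weighted average
`((f a - f t) (b - t) + (f b - f t) (t - a)) / (b - a)`, so the Lipschitz bound gives
`|f̂ t - f t| ≤ 2 L (t - a) (b - t) / (b - a)`. Integrating the square of this bound over the cell
gives `(2/15) L² (b - a)³`, and summing over the `I - 1` cells of width `Δt` gives
`(2/15) (u - l) Δt² L²`.
-/

open Finset

open MeasureTheory Set

theorem integral_sq_sub_mul_sq_sub (a b : ℝ) :
    ∫ t in a..b, (t - a) ^ 2 * (b - t) ^ 2 = (b - a) ^ 5 / 30 := by
  have hderiv : ∀ t : ℝ, HasDerivAt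
      (fun t => (b - a) ^ 2 * (t - a) ^ 3 / 3 - (b - a) * (t - a) ^ 4 / 2 + (t - a) ^ 5 / 5)
      ((t - a) ^ 2 * (b - t) ^ 2) t := by
    intro t
    have h := (hasDerivAt_id' t).sub_const a
    refine ((((h.pow 3).const_mul _).div_const 3).sub (((h.pow 4).const_mul _).div_const 2)
      |>.add ((h.pow 5).div_const 5)).congr_deriv ?_
    push_cast
    ring
  rw [intervalIntegral.integral_eq_sub_of_hasDerivAt (fun t _ => hderiv t)
    (Continuous.intervalIntegrable (by fun_prop) _ _)]
  ring

theorem sq_interp_sub_le {a b t L ya yb y : ℝ} (hab : a < b) (ht : t ∈ Icc a b)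
    (ha : |ya - y| ≤ L * (t - a)) (hb : |yb - y| ≤ L * (b - t)) :
    (ya + (yb - ya) * (t - a) / (b - a) - y) ^ 2 ≤
      4 * L ^ 2 / (b - a) ^ 2 * ((t - a) ^ 2 * (b - t) ^ 2) := by
  have hba : 0 < b - a := sub_pos.mpr hab
  have hweighted : ya + (yb - ya) * (t - a) / (b - a) - y =
      ((ya - y) * (b - t) + (yb - y) * (t - a)) / (b - a) := by
    field_simp
    ring
  have hnum : |(ya - y) * (b - t) + (yb - y) * (t - a)| ≤ 2 * L * (t - a) * (b - t) := by
    have h₁ : 0 ≤ b - t := sub_nonneg.mpr ht.2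
    have h₂ : 0 ≤ t - a := sub_nonneg.mpr ht.1
    calc |(ya - y) * (b - t) + (yb - y) * (t - a)|
        ≤ |ya - y| * (b - t) + |yb - y| * (t - a) := by
          refine (abs_add_le _ _).trans_eq ?_
          rw [abs_mul, abs_mul, abs_of_nonneg h₁, abs_of_nonneg h₂]
      _ ≤ L * (t - a) * (b - t) + L * (b - t) * (t - a) := by gcongr
      _ = 2 * L * (t - a) * (b - t) := by ring
  have habs : |ya + (yb - ya) * (t - a) / (b - a) - y| ≤ 2 * L * (t - a) * (b - t) / (b - a) := by
    rw [hweighted, abs_div, abs_of_pos hba]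
    gcongr
  calc (ya + (yb - ya) * (t - a) / (b - a) - y) ^ 2
      = |ya + (yb - ya) * (t - a) / (b - a) - y| ^ 2 := (sq_abs _).symm
    _ ≤ (2 * L * (t - a) * (b - t) / (b - a)) ^ 2 := pow_le_pow_left₀ (abs_nonneg _) habs 2
    _ = 4 * L ^ 2 / (b - a) ^ 2 * ((t - a) ^ 2 * (b - t) ^ 2) := by rw [div_pow]; ring

section Cell

variable {f g : ℝ → ℝ} {a b L : ℝ}

theorem intervalIntegrable_sq_interp_sub (hab : a ≤ b)
    (hf : ∀ s ∈ Icc a b, ∀ t ∈ Icc a b, |f s - f t| ≤ L * |s - t|)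
    (hg : ∀ t ∈ Icc a b, g t = f a + (f b - f a) * (t - a) / (b - a)) :
    IntervalIntegrable (fun t => (g t - f t) ^ 2) volume a b := by
  have hfc : ContinuousOn f (Icc a b) :=
    (LipschitzOnWith.of_dist_le' (K := L) fun s hs t ht => hf s hs t ht).continuousOn
  have hgc : ContinuousOn g (Icc a b) :=
    (Continuous.continuousOn (by fun_prop)).congr hg
  exact ((hgc.sub hfc).pow 2).intervalIntegrable_of_Icc hab

theorem integral_sq_interp_sub_le (hab : a ≤ b)
    (hf : ∀ s ∈ Icc a b, ∀ t ∈ Icc a b, |f s - f t| ≤ L * |s - t|)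
    (hg : ∀ t ∈ Icc a b, g t = f a + (f b - f a) * (t - a) / (b - a)) :
    ∫ t in a..b, (g t - f t) ^ 2 ≤ 2 / 15 * L ^ 2 * (b - a) ^ 3 := by
  rcases hab.eq_or_lt with rfl | hab
  · simp
  have hpointwise : ∀ t ∈ Icc a b,
      (g t - f t) ^ 2 ≤ 4 * L ^ 2 / (b - a) ^ 2 * ((t - a) ^ 2 * (b - t) ^ 2) := by
    intro t ht
    have ha : a ∈ Icc a b := left_mem_Icc.mpr hab.le
    have hb : b ∈ Icc a b := right_mem_Icc.mpr hab.le
    rw [hg t ht]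
    refine sq_interp_sub_le hab ht ?_ ?_
    · simpa [abs_of_nonpos (sub_nonpos.mpr ht.1)] using hf a ha t ht
    · simpa [abs_of_nonneg (sub_nonneg.mpr ht.2)] using hf b hb t ht
  calc ∫ t in a..b, (g t - f t) ^ 2
      ≤ ∫ t in a..b, 4 * L ^ 2 / (b - a) ^ 2 * ((t - a) ^ 2 * (b - t) ^ 2) :=
        intervalIntegral.integral_mono_on hab.le (intervalIntegrable_sq_interp_sub hab.le hf hg)
          (Continuous.intervalIntegrable (by fun_prop) _ _) hpointwise
    _ = 2 / 15 * L ^ 2 * (b - a) ^ 3 := by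
        rw [intervalIntegral.integral_const_mul, integral_sq_sub_mul_sq_sub]
        field_simp
        ring

end Cell

theorem integral_sq_interp_sub_le_sum {f g : ℝ → ℝ} {a : ℕ → ℝ} {n : ℕ} {L : ℝ}
    (ha : Monotone a)
    (hf : ∀ s ∈ Icc (a 0) (a n), ∀ t ∈ Icc (a 0) (a n), |f s - f t| ≤ L * |s - t|)
    (hg : ∀ k < n, ∀ t ∈ Icc (a k) (a (k + 1)),
      g t = f (a k) + (f (a (k + 1)) - f (a k)) * (t - a k) / (a (k + 1) - a k)) :
    ∫ t in a 0..a n, (g t - f t) ^ 2 ≤ ∑ k ∈ range n, 2 / 15 * L ^ 2 * (a (k + 1) - a k) ^ 3 := by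
  have hcell : ∀ k < n, Icc (a k) (a (k + 1)) ⊆ Icc (a 0) (a n) := fun k hk =>
    Icc_subset_Icc (ha (Nat.zero_le k)) (ha hk)
  have hfcell : ∀ k < n, ∀ s ∈ Icc (a k) (a (k + 1)), ∀ t ∈ Icc (a k) (a (k + 1)),
      |f s - f t| ≤ L * |s - t| := fun k hk s hs t ht =>
    hf s (hcell k hk hs) t (hcell k hk ht)
  rw [← intervalIntegral.sum_integral_adjacent_intervals fun k hk =>
    intervalIntegrable_sq_interp_sub (ha k.le_succ) (hfcell k hk) (hg k hk)]
  exact sum_le_sum fun k hk =>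
    integral_sq_interp_sub_le (ha k.le_succ) (hfcell k (mem_range.mp hk)) (hg k (mem_range.mp hk))

section UniformGrid

variable {l u : ℝ} {I : ℕ}

theorem unifGrid_zero : unifGrid l u I 0 = l := by
  simp [unifGrid]

theorem unifGrid_sub_one (hI : 1 < I) : unifGrid l u I (I - 1) = u := by
  have hI' : (I : ℝ) - 1 ≠ 0 := sub_ne_zero.mpr (by exact_mod_cast hI.ne')
  rw [unifGrid, Nat.cast_sub hI.le, Nat.cast_one, mul_div_assoc, mul_div_cancel₀ _ hI']
  ring

theorem unifGrid_succ_sub (i : ℕ) :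
    unifGrid l u I (i + 1) - unifGrid l u I i = (u - l) / ((I : ℝ) - 1) := by
  simp only [unifGrid]
  push_cast
  ring

theorem monotone_unifGrid (hlu : l ≤ u) (hI : 1 < I) : Monotone (unifGrid l u I) := by
  refine monotone_nat_of_le_succ fun i => sub_nonneg.mp ?_
  rw [unifGrid_succ_sub]
  have : (1 : ℝ) < I := by exact_mod_cast hI
  exact div_nonneg (sub_nonneg.mpr hlu) (by linarith)

end UniformGrid

/-- Piecewise linear approximation error for a Lipschitz function. -/
theorem piecewise_linear_approximation
    (l u : ℝ) (hlu : l < u) (I : ℕ) (hI : 2 ≤ I)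
    (f : ℝ → ℝ) (Lf : ℝ)
    (hfLip : ∀ s ∈ Set.Icc l u, ∀ t ∈ Set.Icc l u, |f s - f t| ≤ Lf * |s - t|)
    (fhat : ℝ → ℝ)
    (hfhat : ∀ i : ℕ, i + 1 < I → ∀ t ∈ Set.Icc (unifGrid l u I i) (unifGrid l u I (i + 1)),
      fhat t = f (unifGrid l u I i) +
        (f (unifGrid l u I (i + 1)) - f (unifGrid l u I i)) *
          (t - unifGrid l u I i) / ((u - l) / ((I : ℝ) - 1))) :
    (∫ t in l..u, (fhat t - f t) ^ 2) ≤
      (2 / 15) * (u - l) * ((u - l) / ((I : ℝ) - 1)) ^ 2 * Lf ^ 2 := by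
  have hI₁ : 1 < I := hI
  have hsum := integral_sq_interp_sub_le_sum (g := fhat) (n := I - 1)
    (monotone_unifGrid hlu.le hI₁)
    (by rwa [unifGrid_zero, unifGrid_sub_one hI₁])
    (fun k hk t ht => by rw [unifGrid_succ_sub]; exact hfhat k (by omega) t ht)
  rw [unifGrid_zero, unifGrid_sub_one hI₁] at hsum
  refine hsum.trans_eq ?_
  have hI' : (I : ℝ) - 1 ≠ 0 := sub_ne_zero.mpr (by exact_mod_cast hI₁.ne')
  simp only [unifGrid_succ_sub, sum_const, card_range, nsmul_eq_mul, Nat.cast_sub hI₁.le,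
    Nat.cast_one]
  field_simp
end

section
/- Let q ∈ (0, 1/2), L > 0, ℓ < u, let K ≥ 3 be an integer, and let S be an integer with S ≥ max{4, log₂(L·(u−ℓ)/(√2·q²·(1−2q)·(1−√2·q)))}. Set K_1 = K − 2 and K_s = 1 for s = 2,…,S, so that r_s = Σ_{t=2}^{s} K_t = s − 1 with r_1 = 0. Then the greedy multiscale expected error bound is at most the single-scale projected gradient descent expected error bound: q^{K−2}·√(2^{S+1})·(q^{S−1} + (L·(u−ℓ)/2^{S+2})·Σ_{s=1}^{S−1} 2^s·q^{s−1}) ≤ q^K·√(2^S + 2). -/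
/-!
The factor √(2^(S+1)) = √2 · √(2^S) is all that the multiscale bound loses against the
single-scale one, and the two iterations saved at the finest scale pay for it: it suffices that
√2 · (q^(S-1) + L(u-l)/2^(S+2) · ∑ 2^s q^(s-1)) ≤ q². Bounding the sum by the geometric series
2/(1-2q), q^(S-1) by q³ (as S ≥ 4) and L(u-l) by 2^S · √2 q²(1-2q)(1-√2 q) (the condition on S),
the left side becomes exactly √2 q³ + q²(1-√2 q) = q².
-/

open Finset

theorem sum_Icc_two_pow_mul_pow_sub_one_le {q : ℝ} (hq0 : 0 ≤ q) (hq : q < 1 / 2) (n : ℕ) :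
    ∑ s ∈ Icc 1 n, (2 : ℝ) ^ s * q ^ (s - 1) ≤ 2 / (1 - 2 * q) := by
  have hterm : ∀ k ∈ range n, (2 : ℝ) ^ (1 + k) * q ^ (1 + k - 1) = 2 * (2 * q) ^ k := by
    intro k _
    rw [Nat.add_sub_cancel_left, pow_add, mul_pow]
    ring
  rw [← Ico_add_one_right_eq_Icc, sum_Ico_eq_sum_range, Nat.add_sub_cancel, sum_congr rfl hterm,
    ← mul_sum, ← mul_one_div]
  gcongr
  simpa using geom_sum_Ico_le_of_lt_one (x := 2 * q) (m := 0) (n := n) (by positivity) (by linarith)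

theorem le_rpow_mul_of_logb_div_le {b x A D : ℝ} (hb : 1 < b) (hD : 0 < D)
    (h : Real.logb b (A / D) ≤ x) : A ≤ b ^ x * D := by
  rcases le_or_gt A 0 with hA | hA
  · exact hA.trans (by positivity)
  · rwa [Real.logb_le_iff_le_rpow hb (div_pos hA hD), div_le_iff₀ hD] at h

theorem one_sub_sqrt_two_mul_pos {q : ℝ} (hq : q < 1 / 2) : 0 < 1 - √2 * q := by
  nlinarith [Real.sqrt_nonneg 2, Real.sq_sqrt zero_le_two]

theorem sqrt_two_mul_multiscale_bound_le_sq {q A : ℝ} {S : ℕ} (hq0 : 0 < q) (hq : q < 1 / 2)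
    (hS : 4 ≤ S) (hA : A ≤ 2 ^ S * (√2 * q ^ 2 * (1 - 2 * q) * (1 - √2 * q))) :
    √2 * (q ^ (S - 1) + A / 2 ^ (S + 2) * ∑ s ∈ Icc 1 (S - 1), (2 : ℝ) ^ s * q ^ (s - 1)) ≤
      q ^ 2 := by
  set G := ∑ s ∈ Icc 1 (S - 1), (2 : ℝ) ^ s * q ^ (s - 1)
  have h2q : 0 < 1 - 2 * q := by linarith
  have hsqrt2q := one_sub_sqrt_two_mul_pos hq
  have hG : G ≤ 2 / (1 - 2 * q) := sum_Icc_two_pow_mul_pow_sub_one_le hq0.le hq (S - 1)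
  have hAG : A / 2 ^ (S + 2) * G ≤ √2 * q ^ 2 * (1 - √2 * q) / 2 := by
    rw [div_mul_eq_mul_div, div_le_iff₀ (by positivity)]
    calc A * G ≤ 2 ^ S * (√2 * q ^ 2 * (1 - 2 * q) * (1 - √2 * q)) * (2 / (1 - 2 * q)) := by
          rcases le_or_gt A 0 with hA0 | hA0
          · exact (mul_nonpos_of_nonpos_of_nonneg hA0 (by positivity)).trans (by positivity)
          · exact mul_le_mul hA hG (by positivity) (by positivity)
      _ = √2 * q ^ 2 * (1 - √2 * q) / 2 * 2 ^ (S + 2) := by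
          rw [pow_add]
          linear_combination (2 ^ S * √2 * q ^ 2 * (1 - √2 * q)) * mul_div_cancel₀ 2 h2q.ne'
  have hqS : q ^ (S - 1) ≤ q ^ 3 := pow_le_pow_of_le_one hq0.le (by linarith) (by omega)
  calc √2 * (q ^ (S - 1) + A / 2 ^ (S + 2) * G)
      ≤ √2 * (q ^ 3 + √2 * q ^ 2 * (1 - √2 * q) / 2) := by gcongr
    _ = q ^ 2 := by
      linear_combination (q ^ 2 * (1 - √2 * q) / 2) * Real.mul_self_sqrt zero_le_two

theorem greedy_multiscale_better_general
    (q L l u : ℝ) (hq0 : 0 < q) (hq : q < 1 / 2)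
    (K S : ℕ) (hK : 3 ≤ K) (hS4 : 4 ≤ S)
    (hSlog : Real.logb 2
        (L * (u - l) / (Real.sqrt 2 * q ^ 2 * (1 - 2 * q) * (1 - Real.sqrt 2 * q))) ≤ (S : ℝ)) :
    q ^ (K - 2) * Real.sqrt ((2 : ℝ) ^ (S + 1)) *
        (q ^ (S - 1) +
          L * (u - l) / 2 ^ (S + 2) *
            ∑ s ∈ Finset.Icc 1 (S - 1), (2 : ℝ) ^ s * q ^ (s - 1)) ≤
      q ^ K * Real.sqrt ((2 : ℝ) ^ S + 2) := by
  have h2q : 0 < 1 - 2 * q := by linarith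
  have hsqrt2q := one_sub_sqrt_two_mul_pos hq
  have hA := le_rpow_mul_of_logb_div_le one_lt_two (by positivity) hSlog
  rw [Real.rpow_natCast] at hA
  set G := ∑ s ∈ Icc 1 (S - 1), (2 : ℝ) ^ s * q ^ (s - 1)
  calc q ^ (K - 2) * √(2 ^ (S + 1)) * (q ^ (S - 1) + L * (u - l) / 2 ^ (S + 2) * G)
      = q ^ (K - 2) * √(2 ^ S) * (√2 * (q ^ (S - 1) + L * (u - l) / 2 ^ (S + 2) * G)) := by
        rw [pow_succ, Real.sqrt_mul' _ zero_le_two]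
        ring
    _ ≤ q ^ (K - 2) * √(2 ^ S) * q ^ 2 := by
        gcongr
        exact sqrt_two_mul_multiscale_bound_le_sq hq0 hq hS4 hA
    _ = q ^ K * √(2 ^ S) := by rw [mul_right_comm, ← pow_add, Nat.sub_add_cancel (by omega)]
    _ ≤ q ^ K * √(2 ^ S + 2) := by gcongr; linarith

/-- Sufficient conditions for greedy multiscale (one iteration per coarse scale, `K−2` at the
finest) to have an expected error bound at most that of `K` iterations of single-scale
projected gradient descent. -/
theorem greedy_multiscale_better
    (q L l u : ℝ) (hq0 : 0 < q) (hq : q < 1 / 2) (hL : 0 < L) (hlu : l < u)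
    (K S : ℕ) (hK : 3 ≤ K) (hS4 : 4 ≤ S)
    (hSlog : Real.logb 2
        (L * (u - l) / (Real.sqrt 2 * q ^ 2 * (1 - 2 * q) * (1 - Real.sqrt 2 * q))) ≤ (S : ℝ)) :
    q ^ (K - 2) * Real.sqrt ((2 : ℝ) ^ (S + 1)) *
        (q ^ (S - 1) +
          L * (u - l) / 2 ^ (S + 2) *
            ∑ s ∈ Finset.Icc 1 (S - 1), (2 : ℝ) ^ s * q ^ (s - 1)) ≤
      q ^ K * Real.sqrt ((2 : ℝ) ^ S + 2) :=
  greedy_multiscale_better_general q L l u hq0 hq K S hK hS4 hSlog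
end

section
/- Consider the lazy multiscale method with constant iteration count K at every scale: let f* : [ℓ,u] → ℝ be L-Lipschitz, let S ≥ 1, let x*_s ∈ ℝ^{I_s} with I_s = 2^{S−s+1} + 1 be the exact samples of f* at scale s with ‖x*_S‖₂ ≤ 1, and let the coarsest initialization x_S^0 ∈ ℝ^3 have independent standard normal entries, so E‖x_S^0 − x*_S‖₂ ≤ 2. Let d = q^K where q ∈ (0,1) is the iterate convergence rate of the base algorithm, and suppose the lazy errors e_s = ‖x_s^K − x*_s‖₂ satisfy e_S ≤ d·‖x_S^0 − x*_S‖₂ and e_s ≤ (1 + d)·e_{s+1} + d·(L·(u−ℓ)/2)/√(2^{S−s}) for s = 1,…,S−1. Then E‖x_1^K − x*_1‖₂ ≤ d·(2·(d+1)^{S−1} + (L/2)·(u−ℓ)·(√(2^S)·(d+1)^S − √2·(d+1))/(√(2^S)·(d+1)·(√2·d + √2 − 1))). -/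
open Finset MeasureTheory ProbabilityTheory

/-- Euclidean norm of the first `n` entries. -/
noncomputable def vnorm (n : ℕ) (x : ℕ → ℝ) : ℝ := Real.sqrt (∑ i ∈ range n, x i ^ 2)

/-!
The error at the finest scale is controlled deterministically: unrolling the per-scale inequality
is a discrete Grönwall argument whose forcing term decays like `(1/√2)^k`, so it sums in closed
form to a geometric expression. In expectation only the coarse initial error remains random, and
by Jensen `E‖x_S^0 − x*_S‖ ≤ √(E‖x_S^0 − x*_S‖²) = √(3 + ‖x*_S‖²) ≤ 2`.
-/

lemma le_pow_mul_add_of_le_mul_add_pow {e : ℕ → ℝ} {a b r : ℝ} (ha : 0 ≤ a) (har : a ≠ r)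
    {n : ℕ} (h : ∀ k < n, e (k + 1) ≤ a * e k + b * r ^ (k + 1)) :
    e n ≤ a ^ n * e 0 + b * r * (a ^ n - r ^ n) / (a - r) := by
  induction n with
  | zero => simp
  | succ n ih =>
    have hne : a - r ≠ 0 := sub_ne_zero.2 har
    calc e (n + 1) ≤ a * e n + b * r ^ (n + 1) := h n n.lt_succ_self
      _ ≤ a * (a ^ n * e 0 + b * r * (a ^ n - r ^ n) / (a - r)) + b * r ^ (n + 1) := by
          gcongr
          exact ih fun k hk => h k (by omega)
      _ = a ^ (n + 1) * e 0 + b * r * (a ^ (n + 1) - r ^ (n + 1)) / (a - r) := by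
          field_simp
          ring

lemma Real.sqrt_pow_of_nonneg {x : ℝ} (hx : 0 ≤ x) (n : ℕ) : √(x ^ n) = √x ^ n := by
  rw [← Real.sqrt_sq (pow_nonneg (Real.sqrt_nonneg x) n), ← pow_mul, mul_comm, pow_mul,
    Real.sq_sqrt hx]

lemma lazy_error_finest_scale_le {S : ℕ} (hS : 1 ≤ S) {d c e₀ : ℝ} (hd : 0 ≤ d)
    (x xstar : ℕ → ℕ → ℝ)
    (heS : vnorm 3 (fun i => x S i - xstar S i) ≤ d * e₀)
    (hrec : ∀ s, 1 ≤ s → s < S →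
      vnorm (2 ^ (S - s + 1) + 1) (fun i => x s i - xstar s i) ≤
        (1 + d) * vnorm (2 ^ (S - s - 1 + 1) + 1) (fun i => x (s + 1) i - xstar (s + 1) i)
          + d * c / √((2 : ℝ) ^ (S - s))) :
    vnorm (2 ^ S + 1) (fun i => x 1 i - xstar 1 i) ≤
      (1 + d) ^ (S - 1) * (d * e₀) +
        d * c * (√2)⁻¹ * ((1 + d) ^ (S - 1) - (√2)⁻¹ ^ (S - 1)) / (1 + d - (√2)⁻¹) := by
  obtain ⟨m, rfl⟩ : ∃ m, S = m + 1 := ⟨S - 1, by omega⟩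
  have hr : (√2)⁻¹ < 1 + d := by
    linarith [inv_lt_one_of_one_lt₀ Real.one_lt_sqrt_two]
  -- `e k` is the error at scale `s = S - k`
  let e : ℕ → ℝ := fun k =>
    vnorm (2 ^ (k + 1) + 1) (fun i => x (m + 1 - k) i - xstar (m + 1 - k) i)
  have he : ∀ k < m, e (k + 1) ≤ (1 + d) * e k + d * c * (√2)⁻¹ ^ (k + 1) := by
    intro k hk
    have h := hrec (m - k) (by omega) (by omega)
    rw [show m + 1 - (m - k) = k + 1 by omega, show m - k + 1 = m + 1 - k by omega,
      Nat.add_sub_cancel, Real.sqrt_pow_of_nonneg zero_le_two, div_eq_mul_inv, ← inv_pow] at h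
    simpa only [e, show m + 1 - (k + 1) = m - k by omega] using h
  have h := le_pow_mul_add_of_le_mul_add_pow (by linarith) hr.ne' he
  have he₀ : e 0 = vnorm 3 (fun i => x (m + 1) i - xstar (m + 1) i) := by simp [e]
  have hem : e m = vnorm (2 ^ (m + 1) + 1) (fun i => x 1 i - xstar 1 i) := by simp [e]
  rw [he₀, hem] at h
  rw [Nat.add_sub_cancel]
  exact h.trans (by gcongr)

section Moments

variable {Ω : Type*} [MeasurableSpace Ω] {P : Measure Ω}

lemma integral_sq_gaussianReal (m : ℝ) (v : NNReal) :
    ∫ x, x ^ 2 ∂gaussianReal m v = v + m ^ 2 := by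
  have h := variance_eq_sub (memLp_id_gaussianReal' (μ := m) (v := v) 2 (by simp))
  simp only [variance_id_gaussianReal, Pi.pow_apply, id, integral_id_gaussianReal] at h
  linarith

lemma memLp_two_of_hasLaw_gaussianReal {X : Ω → ℝ} {m : ℝ} {v : NNReal}
    (hX : HasLaw X (gaussianReal m v) P) : MemLp X 2 P :=
  (hX.map_eq ▸ memLp_id_gaussianReal' 2 (by simp)).comp_of_map hX.aemeasurable

lemma integral_sq_of_hasLaw_gaussianReal {X : Ω → ℝ} {m : ℝ} {v : NNReal}
    (hX : HasLaw X (gaussianReal m v) P) : ∫ ω, X ω ^ 2 ∂P = v + m ^ 2 := by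
  rw [← integral_sq_gaussianReal]
  exact hX.integral_comp (f := fun x => x ^ 2) (by fun_prop)

lemma sq_integral_le_integral_sq [IsProbabilityMeasure P] {Y : Ω → ℝ} (hY : MemLp Y 2 P) :
    (∫ ω, Y ω ∂P) ^ 2 ≤ ∫ ω, Y ω ^ 2 ∂P := by
  have h := variance_nonneg Y P
  rw [variance_eq_sub hY] at h
  simpa only [Pi.pow_apply, sub_nonneg] using h

lemma sq_vnorm (n : ℕ) (x : ℕ → ℝ) : vnorm n x ^ 2 = ∑ i ∈ range n, x i ^ 2 :=
  Real.sq_sqrt (sum_nonneg fun _ _ => sq_nonneg _)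

lemma memLp_vnorm {n : ℕ} {f : Ω → ℕ → ℝ} (hf : ∀ i < n, MemLp (fun ω => f ω i) 2 P) :
    MemLp (fun ω => vnorm n (f ω)) 2 P := by
  refine (memLp_two_iff_integrable_sq ?_).2 ?_
  · refine (Finset.aemeasurable_fun_sum (range n) fun i hi => ?_).sqrt.aestronglyMeasurable
    exact ((hf i (mem_range.1 hi)).aemeasurable).pow_const 2
  · simp only [sq_vnorm]
    exact integrable_finsetSum _ fun i hi => (hf i (mem_range.1 hi)).integrable_sq

lemma integral_vnorm_le_sqrt [IsProbabilityMeasure P] {n : ℕ} {f : Ω → ℕ → ℝ}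
    (hf : ∀ i < n, MemLp (fun ω => f ω i) 2 P) :
    ∫ ω, vnorm n (f ω) ∂P ≤ √(∑ i ∈ range n, ∫ ω, f ω i ^ 2 ∂P) := by
  refine Real.le_sqrt_of_sq_le ((sq_integral_le_integral_sq (memLp_vnorm hf)).trans_eq ?_)
  simp only [sq_vnorm]
  exact integral_finsetSum _ fun i hi => (hf i (mem_range.1 hi)).integrable_sq

lemma integral_vnorm_sub_le_of_hasLaw_gaussianReal [IsProbabilityMeasure P] {n : ℕ}
    {x : Ω → ℕ → ℝ} (hx : ∀ i < n, HasLaw (fun ω => x ω i) (gaussianReal 0 1) P) (c : ℕ → ℝ) :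
    ∫ ω, vnorm n (fun i => x ω i - c i) ∂P ≤ √(n + vnorm n c ^ 2) := by
  have hxc := fun i hi => gaussianReal_sub_const (hx i hi) (c i)
  refine (integral_vnorm_le_sqrt fun i hi =>
    memLp_two_of_hasLaw_gaussianReal (hxc i hi)).trans_eq ?_
  rw [sum_congr rfl fun i hi => integral_sq_of_hasLaw_gaussianReal (hxc i (mem_range.1 hi)),
    sq_vnorm, sum_add_distrib]
  simp

end Moments

theorem expected_lazy_multiscale_convergence_general
    (l u : ℝ) (S : ℕ) (hS : 1 ≤ S)
    {Ω : Type*} [MeasurableSpace Ω] (μ : Measure Ω) [IsProbabilityMeasure μ]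
    (L q : ℝ) (hq0 : 0 < q) (K : ℕ)
    (xstar : ℕ → ℕ → ℝ) (x0 : Ω → ℕ → ℝ) (xK : Ω → ℕ → ℕ → ℝ)
    (hxstarS : vnorm 3 (xstar S) ≤ 1)
    (hlaw : ∀ i < 3, Measure.map (fun ω => x0 ω i) μ = gaussianReal 0 1)
    (heS : ∀ ω, vnorm 3 (fun i => xK ω S i - xstar S i) ≤
      q ^ K * vnorm 3 (fun i => x0 ω i - xstar S i))
    (hrec : ∀ ω, ∀ s, 1 ≤ s → s < S →
      vnorm (2 ^ (S - s + 1) + 1) (fun i => xK ω s i - xstar s i) ≤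
        (1 + q ^ K) * vnorm (2 ^ (S - s - 1 + 1) + 1) (fun i => xK ω (s + 1) i - xstar (s + 1) i)
          + q ^ K * (L * (u - l) / 2) / Real.sqrt ((2 : ℝ) ^ (S - s))) :
    (∫ ω, vnorm 3 (fun i => x0 ω i - xstar S i) ∂μ ≤ 2) ∧
    (∫ ω, vnorm (2 ^ S + 1) (fun i => xK ω 1 i - xstar 1 i) ∂μ ≤
      q ^ K * (2 * (q ^ K + 1) ^ (S - 1) +
        (L / 2) * (u - l) *
          (Real.sqrt ((2 : ℝ) ^ S) * (q ^ K + 1) ^ S - Real.sqrt 2 * (q ^ K + 1)) /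
            (Real.sqrt ((2 : ℝ) ^ S) * (q ^ K + 1) * (Real.sqrt 2 * q ^ K + Real.sqrt 2 - 1)))) := by
  have hd : 0 ≤ q ^ K := by positivity
  have hx0 : ∀ i < 3, HasLaw (fun ω => x0 ω i) (gaussianReal 0 1) μ := fun i hi =>
    ⟨.of_map_ne_zero (hlaw i hi ▸ IsProbabilityMeasure.ne_zero _), hlaw i hi⟩
  have hE₀ : ∫ ω, vnorm 3 (fun i => x0 ω i - xstar S i) ∂μ ≤ 2 := by
    have hv : 0 ≤ vnorm 3 (xstar S) := Real.sqrt_nonneg _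
    refine (integral_vnorm_sub_le_of_hasLaw_gaussianReal hx0 _).trans
      (Real.sqrt_le_iff.2 ⟨zero_le_two, ?_⟩)
    push_cast
    nlinarith
  have hg : Integrable (fun ω => vnorm 3 (fun i => x0 ω i - xstar S i)) μ :=
    (memLp_vnorm fun i hi => memLp_two_of_hasLaw_gaussianReal
      (gaussianReal_sub_const (hx0 i hi) (xstar S i))).integrable one_le_two
  refine ⟨hE₀, ?_⟩
  set C := q ^ K * (L * (u - l) / 2) * (√2)⁻¹ * ((1 + q ^ K) ^ (S - 1) - (√2)⁻¹ ^ (S - 1)) /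
    (1 + q ^ K - (√2)⁻¹)
  calc ∫ ω, vnorm (2 ^ S + 1) (fun i => xK ω 1 i - xstar 1 i) ∂μ
      ≤ ∫ ω, ((1 + q ^ K) ^ (S - 1) * (q ^ K * vnorm 3 (fun i => x0 ω i - xstar S i)) + C) ∂μ :=
        integral_mono_of_nonneg (ae_of_all _ fun _ => Real.sqrt_nonneg _)
          ((hg.const_mul _).const_mul _ |>.add (integrable_const C))
          (ae_of_all _ fun ω => lazy_error_finest_scale_le hS hd (xK ω) xstar (heS ω) (hrec ω))
    _ = (1 + q ^ K) ^ (S - 1) * (q ^ K * ∫ ω, vnorm 3 (fun i => x0 ω i - xstar S i) ∂μ) + C := by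
        rw [integral_add ((hg.const_mul _).const_mul _) (integrable_const C), integral_const_mul,
          integral_const_mul, integral_const, probReal_univ, one_smul]
    _ ≤ (1 + q ^ K) ^ (S - 1) * (q ^ K * 2) + C := by gcongr
    _ = _ := by
        obtain ⟨m, rfl⟩ : ∃ m, S = m + 1 := ⟨S - 1, by omega⟩
        have hden : √2 * q ^ K + √2 - 1 ≠ 0 := by nlinarith [Real.one_lt_sqrt_two]
        rw [Real.sqrt_pow_of_nonneg zero_le_two]
        simp only [C, Nat.add_sub_cancel, inv_pow]
        field_simp
        ring

/-- Expected lazy multiscale convergence with a constant iteration count `K` at every scale,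
from a standard Gaussian initialization at the coarsest scale `S` (which has `I_S = 3` points);
scale `s` has `I_s = 2^(S−s+1) + 1` points and `d = q^K`. -/
theorem expected_lazy_multiscale_convergence
    (l u : ℝ) (hlu : l < u) (S : ℕ) (hS : 1 ≤ S)
    {Ω : Type*} [MeasurableSpace Ω] (μ : Measure Ω) [IsProbabilityMeasure μ]
    (fstar : ℝ → ℝ) (L q : ℝ) (hq0 : 0 < q) (hq1 : q < 1) (K : ℕ)
    (hfLip : ∀ a ∈ Set.Icc l u, ∀ b ∈ Set.Icc l u, |fstar a - fstar b| ≤ L * |a - b|)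
    (xstar : ℕ → ℕ → ℝ) (x0 : Ω → ℕ → ℝ) (xK : Ω → ℕ → ℕ → ℝ)
    (hxstar : ∀ s, 1 ≤ s → s ≤ S → ∀ i < 2 ^ (S - s + 1) + 1,
      xstar s i = fstar (unifGrid l u (2 ^ (S - s + 1) + 1) i))
    (hxstarS : vnorm 3 (xstar S) ≤ 1)
    (hmeas : ∀ i, Measurable fun ω => x0 ω i)
    (hlaw : ∀ i < 3, Measure.map (fun ω => x0 ω i) μ = gaussianReal 0 1)
    (hindep : iIndepFun
      (fun i : Fin 3 => fun ω => x0 ω i.val) μ)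
    (heS : ∀ ω, vnorm 3 (fun i => xK ω S i - xstar S i) ≤
      q ^ K * vnorm 3 (fun i => x0 ω i - xstar S i))
    (hrec : ∀ ω, ∀ s, 1 ≤ s → s < S →
      vnorm (2 ^ (S - s + 1) + 1) (fun i => xK ω s i - xstar s i) ≤
        (1 + q ^ K) * vnorm (2 ^ (S - s - 1 + 1) + 1) (fun i => xK ω (s + 1) i - xstar (s + 1) i)
          + q ^ K * (L * (u - l) / 2) / Real.sqrt ((2 : ℝ) ^ (S - s))) :
    (∫ ω, vnorm 3 (fun i => x0 ω i - xstar S i) ∂μ ≤ 2) ∧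
    (∫ ω, vnorm (2 ^ S + 1) (fun i => xK ω 1 i - xstar 1 i) ∂μ ≤
      q ^ K * (2 * (q ^ K + 1) ^ (S - 1) +
        (L / 2) * (u - l) *
          (Real.sqrt ((2 : ℝ) ^ S) * (q ^ K + 1) ^ S - Real.sqrt 2 * (q ^ K + 1)) /
            (Real.sqrt ((2 : ℝ) ^ S) * (q ^ K + 1) * (Real.sqrt 2 * q ^ K + Real.sqrt 2 - 1)))) :=
  expected_lazy_multiscale_convergence_general l u S hS μ L q hq0 K xstar x0 xK hxstarS hlaw heS
    hrec
end
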